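/- arXiv:math/0307032 — 8 statements merged into one kernel-verified Lean document; each statement's English description precedes it below -/
import Mathlib

section
/- Let R be a unital (possibly noncommutative) ring and let e = (e_{ij}) be a 2×2 matrix over R satisfying e² = e and e₁₁ + e₂₂ = 1. Then the entries of e pairwise commute: e₁₂e₂₁ = e₂₁e₁₂, e₁₁e₁₂ = e₁₂e₁₁, e₁₁e₂₁ = e₂₁e₁₁ (and hence, since e₂₂ = 1 − e₁₁, any two entries of e commute). In particular the subring generated by the entries of e is commutative. -/
/-- If `e` is a 2×2 idempotent matrix over a unital ring `R` with `e₁₁ + e₂₂ = 1`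
(vanishing of `ch₀(e)` for a rank-one projection), then the entries of `e` pairwise
commute; in particular the subring generated by the entries of `e` is commutative. -/
theorem entries_of_idempotent_trace_one_commute
    (R : Type*) [Ring R] (e : Matrix (Fin 2) (Fin 2) R)
    (he : e * e = e) (htr : e 0 0 + e 1 1 = 1) :
    (e 0 1 * e 1 0 = e 1 0 * e 0 1 ∧
      e 0 0 * e 0 1 = e 0 1 * e 0 0 ∧
      e 0 0 * e 1 0 = e 1 0 * e 0 0) ∧
    (∀ i j k l : Fin 2, Commute (e i j) (e k l)) ∧
    (∀ x ∈ Subring.closure {a : R | ∃ i j : Fin 2, e i j = a},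
      ∀ y ∈ Subring.closure {a : R | ∃ i j : Fin 2, e i j = a}, Commute x y) := by
  have hd : e 1 1 = 1 - e 0 0 := eq_sub_of_add_eq' htr
  have h00 := congrFun (congrFun he 0) 0
  have h01 := congrFun (congrFun he 0) 1
  have h10 := congrFun (congrFun he 1) 0
  have h11 := congrFun (congrFun he 1) 1
  simp only [Matrix.mul_apply, Fin.sum_univ_two] at h00 h01 h10 h11
  rw [hd, mul_sub, mul_one] at h01
  rw [hd, sub_mul, one_mul] at h10
  rw [hd, sub_mul, one_mul, mul_sub, mul_one] at h11
  have hab : e 0 0 * e 0 1 = e 0 1 * e 0 0 := by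
    have h := eq_sub_of_add_eq h01
    rwa [sub_sub_cancel] at h
  have hac : e 0 0 * e 1 0 = e 1 0 * e 0 0 := by
    have h := eq_sub_of_add_eq h10
    rw [sub_sub_cancel] at h
    exact h.symm
  have hbc1 : e 0 1 * e 1 0 = e 0 0 - e 0 0 * e 0 0 := eq_sub_of_add_eq' h00
  have hbc2 : e 1 0 * e 0 1 = e 0 0 - e 0 0 * e 0 0 := by
    have h := eq_sub_of_add_eq h11
    rwa [sub_sub_cancel] at h
  have hbc : e 0 1 * e 1 0 = e 1 0 * e 0 1 := hbc1.trans hbc2.symm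
  have hall : ∀ i j k l : Fin 2, Commute (e i j) (e k l) := by
    have key : ∀ k l : Fin 2, Commute (e 0 0) (e k l) ∧ Commute (e 0 1) (e k l) ∧
        Commute (e 1 0) (e k l) := by
      intro k l
      fin_cases k <;> fin_cases l <;>
        simp only [Fin.zero_eta, Fin.mk_one, Fin.isValue] <;>
        refine ⟨?_, ?_, ?_⟩ <;>
        first
          | exact Commute.refl _
          | exact hab | exact hac | exact hbc
          | exact (Commute.refl _ : Commute (e 0 0) (e 0 0))
          | exact hab.symm ▸ hab.symm
          | exact (hab.symm : Commute (e 0 1) (e 0 0))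
          | exact (hac.symm : Commute (e 1 0) (e 0 0))
          | exact (hbc.symm : Commute (e 1 0) (e 0 1))
          | (rw [hd]
             exact (Commute.one_right _).sub_right (by
              first
                | exact Commute.refl _
                | exact (hab.symm : Commute (e 0 1) (e 0 0))
                | exact (hac.symm : Commute (e 1 0) (e 0 0))))
    intro i j k l
    fin_cases i <;> fin_cases j <;>
      simp only [Fin.zero_eta, Fin.mk_one, Fin.isValue]
    · exact (key k l).1
    · exact (key k l).2.1
    · exact (key k l).2.2
    · rw [hd]
      exact (Commute.one_left _).sub_left ((key k l).1)
  refine ⟨⟨hbc, hab, hac⟩, hall, ?_⟩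
  intro x hx y hy
  induction hx, hy using Subring.closure_induction₂ with
  | mem_mem a b ha hb =>
      obtain ⟨i, j, rfl⟩ := ha
      obtain ⟨k, l, rfl⟩ := hb
      exact hall i j k l
  | zero_left b hb => exact Commute.zero_left b
  | zero_right a ha => exact Commute.zero_right a
  | one_left b hb => exact Commute.one_left b
  | one_right a ha => exact Commute.one_right a
  | neg_left a b ha hb h => exact h.neg_left
  | neg_right a b ha hb h => exact h.neg_right
  | add_left a b c ha hb hc h1 h2 => exact h1.add_left h2
  | add_right a b c ha hb hc h1 h2 => exact h1.add_right h2
  | mul_left a b c ha hb hc h1 h2 => exact h1.mul_left h2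
  | mul_right a b c ha hb hc h1 h2 => exact h1.mul_right h2
end

section
/- Let A be a unital *-algebra over ℂ, θ ∈ ℝ, λ = exp(2πiθ), and let α, β, z ∈ A with z = z*. Set q = [[α, β], [−λβ*, α*]] ∈ Mat₂(A) and let e = (1/2)·[[(1+z)·I₂, q], [q*, (1−z)·I₂]] ∈ Mat₄(A), where q* denotes the conjugate transpose of q. Then e satisfies e* = e, and e² = e holds if and only if all of the following hold: z commutes with α, α*, β, β*; αα* = α*α; ββ* = β*β; αβ = λβα; α*β = λ̄βα*; and αα* + ββ* + z² = 1. -/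
open Matrix


set_option maxHeartbeats 1000000 in
theorem sTheta4_key (A : Type*) [Ring A] [Algebra ℂ A] [StarRing A] [StarModule ℂ A]
    (lam : ℂ) (hlam : (starRingEnd ℂ) lam * lam = 1) (α β z : A) (hz : star z = z) :
    let q : Matrix (Fin 2) (Fin 2) A := !![α, β; -(lam • star β), star α]
    let e : Matrix (Fin 4) (Fin 4) A :=
      (2 : ℂ)⁻¹ • (Matrix.reindex finSumFinEquiv finSumFinEquiv
        (Matrix.fromBlocks ((1 + z) • (1 : Matrix (Fin 2) (Fin 2) A)) q
          qᴴ ((1 - z) • (1 : Matrix (Fin 2) (Fin 2) A))))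
    (e * e = e ↔
        (Commute z α ∧ Commute z (star α) ∧ Commute z β ∧ Commute z (star β) ∧
          α * star α = star α * α ∧ β * star β = star β * β ∧
          α * β = lam • (β * α) ∧
          star α * β = (starRingEnd ℂ) lam • (β * star α) ∧
          α * star α + β * star β + z ^ 2 = 1)) := by
  intro q e
  have hs : star lam * lam = 1 := hlam
  have hs' : lam * star lam = 1 := by rw [mul_comm]; exact hlam
  have hq : q = !![α, β; -(lam • star β), star α] := rfl
  set F : Matrix (Fin 2 ⊕ Fin 2) (Fin 2 ⊕ Fin 2) A :=
    Matrix.fromBlocks ((1 + z) • (1 : Matrix (Fin 2) (Fin 2) A)) q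
          qᴴ ((1 - z) • (1 : Matrix (Fin 2) (Fin 2) A)) with hF
  have he : e = (2 : ℂ)⁻¹ • (Matrix.reindex finSumFinEquiv finSumFinEquiv F) := rfl
  have step1 : e * e = e ↔ F * F = (2 : ℂ) • F := by
    rw [he, Matrix.smul_mul, Matrix.mul_smul, smul_smul]
    rw [show ((2:ℂ)⁻¹ * 2⁻¹) = (4:ℂ)⁻¹ by norm_num,
      inv_smul_eq_iff₀ (by norm_num : (4:ℂ) ≠ 0), smul_smul,
      show ((4:ℂ) * 2⁻¹) = (2:ℂ) by norm_num]
    rw [Matrix.reindex_apply, Matrix.submatrix_mul_equiv]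
    exact Equiv.apply_eq_iff_eq (x := F * F) (y := (2:ℂ) • F)
      (Matrix.reindex finSumFinEquiv finSumFinEquiv)
  rw [step1, hF, Matrix.fromBlocks_multiply, Matrix.fromBlocks_smul,
    Matrix.fromBlocks_inj]
  constructor
  · rintro ⟨h11, h12, -, h22⟩
    have e1 := congrFun (congrFun h11 0) 0
    have e2 := congrFun (congrFun h11 0) 1
    have e5 := congrFun (congrFun h12 0) 0
    have e6 := congrFun (congrFun h12 0) 1
    have e8 := congrFun (congrFun h12 1) 1
    have e13 := congrFun (congrFun h22 0) 0
    have e14 := congrFun (congrFun h22 0) 1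
    have e16 := congrFun (congrFun h22 1) 1
    simp only [hq, Matrix.mul_apply, Fin.sum_univ_two, Matrix.smul_apply, Matrix.one_apply,
      Matrix.add_apply, Matrix.conjTranspose_apply, Matrix.vecMul, dotProduct]
      at e1 e2 e5 e6 e8 e13 e14 e16
    simp [Matrix.mul_apply, Fin.sum_univ_two] at e1 e2 e5 e6 e8 e13 e14 e16
    rw [smul_smul, show lam * (starRingEnd ℂ) lam = (1:ℂ) from hs', one_smul] at e13
    -- R1
    have R1 : Commute z α := by
      rw [two_smul] at e5
      have : z * α - α * z = 0 := by
        calc z * α - α * z = ((1+z) * α + α * (1-z)) - (α + α) := by noncomm_ring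
          _ = 0 := by rw [e5, sub_self]
      exact sub_eq_zero.mp this
    have R3 : Commute z β := by
      rw [two_smul] at e6
      have : z * β - β * z = 0 := by
        calc z * β - β * z = ((1+z) * β + β * (1-z)) - (β + β) := by noncomm_ring
          _ = 0 := by rw [e6, sub_self]
      exact sub_eq_zero.mp this
    have R2 : Commute z (star α) := by
      rw [two_smul] at e8
      have : z * star α - star α * z = 0 := by
        calc z * star α - star α * z
            = ((1+z) * star α + star α * (1-z)) - (star α + star α) := by noncomm_ring
          _ = 0 := by rw [e8, sub_self]
      exact sub_eq_zero.mp this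
    have R4 : Commute z (star β) := by
      have h := congrArg star R3.eq
      rw [StarMul.star_mul, StarMul.star_mul, hz] at h
      exact h.symm
    rw [two_smul, two_smul] at e1
    have s1 : α * star α + β * star β = 1 - z * z := by
      have : (α * star α + β * star β) - (1 - z * z) = 0 := by
        calc (α * star α + β * star β) - (1 - z * z)
            = ((1+z) * (1+z) + (α * star α + β * star β)) - ((1 + 1) + (z + z)) := by
              noncomm_ring
          _ = 0 := by rw [e1, sub_self]
      exact sub_eq_zero.mp this
    rw [two_smul] at e13
    have s2 : star α * α + β * star β = 1 - z * z := by
      have : (star α * α + β * star β) - (1 - z * z) = 0 := by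
        calc (star α * α + β * star β) - (1 - z * z)
            = (star α * α + β * star β + (1-z) * (1-z)) - ((1-z) + (1-z)) := by noncomm_ring
          _ = 0 := by rw [e13, sub_self]
      exact sub_eq_zero.mp this
    rw [two_smul] at e16
    have s3 : star β * β + α * star α = 1 - z * z := by
      have : (star β * β + α * star α) - (1 - z * z) = 0 := by
        calc (star β * β + α * star α) - (1 - z * z)
            = (star β * β + α * star α + (1-z) * (1-z)) - ((1-z) + (1-z)) := by noncomm_ring
          _ = 0 := by rw [e16, sub_self]
      exact sub_eq_zero.mp this
    have R5 : α * star α = star α * α := by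
      have : α * star α - star α * α = 0 := by
        calc α * star α - star α * α
            = (α * star α + β * star β) - (star α * α + β * star β) := by noncomm_ring
          _ = 0 := by rw [s1, s2, sub_self]
      exact sub_eq_zero.mp this
    have R6 : β * star β = star β * β := by
      have : β * star β - star β * β = 0 := by
        calc β * star β - star β * β
            = (α * star α + β * star β) - (star β * β + α * star α) := by noncomm_ring
          _ = 0 := by rw [s1, s3, sub_self]
      exact sub_eq_zero.mp this
    have R9 : α * star α + β * star β + z ^ 2 = 1 := by
      have : (α * star α + β * star β + z ^ 2) - 1 = 0 := by
        calc (α * star α + β * star β + z ^ 2) - 1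
            = (α * star α + β * star β) - (1 - z * z) := by noncomm_ring
          _ = 0 := by rw [s1, sub_self]
      exact sub_eq_zero.mp this
    have R7 : α * β = lam • (β * α) := by
      have h : (starRingEnd ℂ) lam • (α * β) = β * α := by
        have := e2
        rw [neg_add_eq_zero] at this
        exact this
      calc α * β = (lam * (starRingEnd ℂ) lam) • (α * β) := by
            rw [show lam * (starRingEnd ℂ) lam = (1:ℂ) from hs', one_smul]
        _ = lam • ((starRingEnd ℂ) lam • (α * β)) := by rw [smul_smul]
        _ = lam • (β * α) := by rw [h]
    have R8 : star α * β = (starRingEnd ℂ) lam • (β * star α) := by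
      have := e14
      rw [add_neg_eq_zero] at this
      exact this
    exact ⟨R1, R2, R3, R4, R5, R6, R7, R8, R9⟩
  · rintro ⟨R1, R2, R3, R4, R5, R6, R7, R8, R9⟩
    have s1 : α * star α + β * star β = 1 - z * z := by
      have : (α * star α + β * star β) - (1 - z * z) = 0 := by
        calc (α * star α + β * star β) - (1 - z * z)
            = (α * star α + β * star β + z ^ 2) - 1 := by noncomm_ring
          _ = 0 := by rw [R9, sub_self]
      exact sub_eq_zero.mp this
    have s2 : star α * α + β * star β = 1 - z * z := by rw [← R5]; exact s1
    have s3 : star β * β + α * star α = 1 - z * z := by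
      rw [← R6]
      have : (β * star β + α * star α) - (1 - z * z) = 0 := by
        calc (β * star β + α * star α) - (1 - z * z)
            = (α * star α + β * star β) - (1 - z * z) := by noncomm_ring
          _ = 0 := by rw [s1, sub_self]
      exact sub_eq_zero.mp this
    have hvu : lam • (star β * star α) = star α * star β := by
      have h := congrArg star R7
      rw [StarMul.star_mul, star_smul, StarMul.star_mul] at h
      rw [h, smul_smul, hs', one_smul]
    have hva : star β * α = lam • (α * star β) := by
      have h := congrArg star R8
      rw [StarMul.star_mul, star_smul, StarMul.star_mul, star_star] at h
      rw [h, show star ((starRingEnd ℂ) lam) = lam from star_star lam]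
    have h7 : (starRingEnd ℂ) lam • (α * β) = β * α := by
      rw [R7, smul_smul, hlam, one_smul]
    have hsmul_oneM : ∀ a : A, ((a • (1 : Matrix (Fin 2) (Fin 2) A))ᴴ) = star a • 1 := by
      intro a; ext i j
      by_cases h : i = j <;>
        simp [h, Matrix.conjTranspose_apply, Matrix.one_apply, Ne.symm]
    have s4 : star β * β + star α * α = 1 - z * z := by rw [← R5]; exact s3
    have hB12 : (1 + z) • (1 : Matrix (Fin 2) (Fin 2) A) * q + q * (1 - z) • 1
        = (2:ℂ) • q := by
      ext i j
      fin_cases i <;> fin_cases j <;>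
        simp only [hq, Matrix.mul_apply, Fin.sum_univ_two, Matrix.smul_apply,
          Matrix.one_apply, Matrix.add_apply, Matrix.conjTranspose_apply,
          Matrix.vecMul, dotProduct] <;>
        simp [Matrix.mul_apply, Fin.sum_univ_two]
      · rw [two_smul, ← sub_eq_zero]
        calc (1+z) * α + α * (1-z) - (α + α) = z * α - α * z := by noncomm_ring
          _ = 0 := by rw [R1.eq, sub_self]
      · rw [two_smul, ← sub_eq_zero]
        calc (1+z) * β + β * (1-z) - (β + β) = z * β - β * z := by noncomm_ring
          _ = 0 := by rw [R3.eq, sub_self]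
      · have hv : (1+z) * star β + star β * (1-z) = star β + star β := by
          rw [← sub_eq_zero]
          calc (1+z) * star β + star β * (1-z) - (star β + star β)
              = z * star β - star β * z := by noncomm_ring
            _ = 0 := by rw [R4.eq, sub_self]
        rw [← neg_add, ← smul_add, hv, two_smul, smul_add]
      · rw [two_smul, ← sub_eq_zero]
        calc (1+z) * star α + star α * (1-z) - (star α + star α)
            = z * star α - star α * z := by noncomm_ring
          _ = 0 := by rw [R2.eq, sub_self]
    refine ⟨?_, hB12, ?_, ?_⟩
    · -- B11
      ext i j
      fin_cases i <;> fin_cases j <;>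
        simp only [hq, Matrix.mul_apply, Fin.sum_univ_two, Matrix.smul_apply,
          Matrix.one_apply, Matrix.add_apply, Matrix.conjTranspose_apply,
          Matrix.vecMul, dotProduct] <;>
        simp [Matrix.mul_apply, Fin.sum_univ_two]
      · rw [two_smul, two_smul, ← sub_eq_zero]
        calc (1+z) * (1+z) + (α * star α + β * star β) - (1 + 1 + (z + z))
            = (α * star α + β * star β) - (1 - z * z) := by noncomm_ring
          _ = 0 := by rw [s1, sub_self]
      · rw [h7, neg_add_cancel]
      · rw [hvu, neg_add_cancel]
      · rw [smul_smul, show (starRingEnd ℂ) lam * lam = (1:ℂ) from hlam, one_smul,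
          two_smul, two_smul, ← sub_eq_zero]
        calc (1+z) * (1+z) + (star β * β + star α * α) - (1 + 1 + (z + z))
            = (star β * β + star α * α) - (1 - z * z) := by noncomm_ring
          _ = 0 := by rw [s4, sub_self]
    · -- B21 via conjTranspose of B12
      have h := congrArg Matrix.conjTranspose hB12
      rw [Matrix.conjTranspose_add, Matrix.conjTranspose_mul, Matrix.conjTranspose_mul,
        hsmul_oneM, hsmul_oneM, Matrix.conjTranspose_smul,
        show star (1+z) = 1+z by simp [hz], show star (1-z) = 1-z by simp [hz],
        show star (2:ℂ) = (2:ℂ) by norm_num] at h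
      exact h
    · -- B22
      ext i j
      fin_cases i <;> fin_cases j <;>
        simp only [hq, Matrix.mul_apply, Fin.sum_univ_two, Matrix.smul_apply,
          Matrix.one_apply, Matrix.add_apply, Matrix.conjTranspose_apply,
          Matrix.vecMul, dotProduct] <;>
        simp [Matrix.mul_apply, Fin.sum_univ_two]
      · rw [smul_smul, show lam * (starRingEnd ℂ) lam = (1:ℂ) from hs', one_smul,
          two_smul, ← sub_eq_zero]
        calc star α * α + β * star β + (1-z) * (1-z) - ((1-z) + (1-z))
            = (star α * α + β * star β) - (1 - z * z) := by noncomm_ring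
          _ = 0 := by rw [s2, sub_self]
      · rw [R8, add_neg_cancel]
      · rw [hva, add_neg_cancel]
      · rw [two_smul, ← sub_eq_zero]
        calc star β * β + α * star α + (1-z) * (1-z) - ((1-z) + (1-z))
            = (star β * β + α * star α) - (1 - z * z) := by noncomm_ring
          _ = 0 := by rw [s3, sub_self]

/-- The 4×4 matrix `e` built from `α, β, z` with `q = [[α, β], [−λβ*, α*]]` is
self-adjoint, and it is an idempotent if and only if the defining relations of the
noncommutative 4-sphere `S_θ⁴` hold, where `λ = exp(2πiθ)`. -/
theorem sTheta4_projection_iff_relations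
    (A : Type*) [Ring A] [Algebra ℂ A] [StarRing A] [StarModule ℂ A]
    (θ : ℝ) (α β z : A) (hz : star z = z) :
    let lam : ℂ := Complex.exp (2 * Real.pi * Complex.I * (θ : ℂ))
    let q : Matrix (Fin 2) (Fin 2) A := !![α, β; -(lam • star β), star α]
    let e : Matrix (Fin 4) (Fin 4) A :=
      (2 : ℂ)⁻¹ • (Matrix.reindex finSumFinEquiv finSumFinEquiv
        (Matrix.fromBlocks ((1 + z) • (1 : Matrix (Fin 2) (Fin 2) A)) q
          qᴴ ((1 - z) • (1 : Matrix (Fin 2) (Fin 2) A))))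
    eᴴ = e ∧
      (e * e = e ↔
        (Commute z α ∧ Commute z (star α) ∧ Commute z β ∧ Commute z (star β) ∧
          α * star α = star α * α ∧ β * star β = star β * β ∧
          α * β = lam • (β * α) ∧
          star α * β = (starRingEnd ℂ) lam • (β * star α) ∧
          α * star α + β * star β + z ^ 2 = 1)) := by
  intro lam q e
  have hlam : (starRingEnd ℂ) lam * lam = 1 := by
    show (starRingEnd ℂ) (Complex.exp _) * _ = 1
    rw [← Complex.exp_conj, ← Complex.exp_add]
    have hc : (starRingEnd ℂ) (2 * (Real.pi : ℂ) * Complex.I * (θ : ℂ))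
        = -(2 * (Real.pi : ℂ) * Complex.I * (θ : ℂ)) := by
      simp only [_root_.map_mul, Complex.conj_I, Complex.conj_ofReal, map_ofNat]
      ring
    rw [hc, neg_add_cancel, Complex.exp_zero]
  constructor
  · -- self-adjointness
    have hsmul_one : ∀ a : A, ((a • (1 : Matrix (Fin 2) (Fin 2) A))ᴴ) = star a • 1 := by
      intro a; ext i j
      by_cases h : i = j <;>
        simp [h, Matrix.conjTranspose_apply, Matrix.one_apply, Ne.symm]
    show ((2 : ℂ)⁻¹ • (Matrix.reindex finSumFinEquiv finSumFinEquiv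
        (Matrix.fromBlocks ((1 + z) • (1 : Matrix (Fin 2) (Fin 2) A)) q
          qᴴ ((1 - z) • (1 : Matrix (Fin 2) (Fin 2) A)))))ᴴ = _
    rw [Matrix.conjTranspose_smul, Matrix.conjTranspose_reindex,
      Matrix.fromBlocks_conjTranspose, Matrix.conjTranspose_conjTranspose,
      hsmul_one, hsmul_one]
    have h1 : star (1 + z) = 1 + z := by simp [hz]
    have h2 : star (1 - z) = 1 - z := by simp [hz]
    rw [h1, h2]
    have h3 : star ((2:ℂ)⁻¹) = (2:ℂ)⁻¹ := by norm_num
    rw [h3]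
  · exact sTheta4_key A lam hlam α β z hz
end

section
/- Let A be a unital *-algebra over ℂ, θ ∈ ℝ, λ = exp(2πiθ), and let α, β, z ∈ A satisfy the relations of S_θ⁴: z = z* commutes with α, α*, β, β*; αα* = α*α; ββ* = β*β; αβ = λβα; α*β = λ̄βα*; αα* + ββ* + z² = 1. Let e ∈ Mat₄(A) be the projection e = (1/2)·[[(1+z)·I₂, q], [q*, (1−z)·I₂]] with q = [[α, β], [−λβ*, α*]]. Let Ā denote the quotient ℂ-module A/ℂ·1 with quotient map π : A → Ā. Then the degree-one component of the Chern character of e vanishes: Σ_{i,j,k=1}^{4} (e_{ij} − (1/2)δ_{ij}) ⊗ π(e_{jk}) ⊗ π(e_{ki}) = 0 as an element of A ⊗_ℂ Ā ⊗_ℂ Ā. -/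
open Matrix
open scoped TensorProduct

set_option maxHeartbeats 4000000 in
/-- For the canonical projection `e` over the noncommutative 4-sphere `S_θ⁴`, the
degree-one component of its Chern character vanishes in `A ⊗ Ā ⊗ Ā`,
where `Ā = A/ℂ·1`. -/
theorem sTheta4_ch_one_vanishes
    (A : Type*) [Ring A] [Algebra ℂ A] [StarRing A] [StarModule ℂ A]
    (θ : ℝ) (lam : ℂ) (hlam : lam = Complex.exp (2 * Real.pi * Complex.I * (θ : ℂ)))
    (α β z : A) (hz : star z = z)
    (h1 : Commute z α) (h2 : Commute z (star α))
    (h3 : Commute z β) (h4 : Commute z (star β))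
    (h5 : α * star α = star α * α) (h6 : β * star β = star β * β)
    (h7 : α * β = lam • (β * α))
    (h8 : star α * β = (starRingEnd ℂ) lam • (β * star α))
    (h9 : α * star α + β * star β + z ^ 2 = 1) :
    let q : Matrix (Fin 2) (Fin 2) A := !![α, β; -(lam • star β), star α]
    let e : Matrix (Fin 4) (Fin 4) A :=
      (2 : ℂ)⁻¹ • (Matrix.reindex finSumFinEquiv finSumFinEquiv
        (Matrix.fromBlocks ((1 + z) • (1 : Matrix (Fin 2) (Fin 2) A)) q
          qᴴ ((1 - z) • (1 : Matrix (Fin 2) (Fin 2) A))))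
    let π : A →ₗ[ℂ] (A ⧸ Submodule.span ℂ {(1 : A)}) :=
      (Submodule.span ℂ {(1 : A)}).mkQ
    ∑ i : Fin 4, ∑ j : Fin 4, ∑ k : Fin 4,
        ((e - (2 : ℂ)⁻¹ • 1) i j) ⊗ₜ[ℂ] (π (e j k) ⊗ₜ[ℂ] π (e k i)) = 0 := by
  intro q e π
  have hc : (starRingEnd ℂ) lam * lam = 1 := by
    rw [hlam, ← Complex.exp_conj, ← Complex.exp_add]
    rw [show (starRingEnd ℂ) (2 * Real.pi * Complex.I * (θ : ℂ)) =
        -(2 * Real.pi * Complex.I * (θ : ℂ)) from by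
      simp only [_root_.map_mul, Complex.conj_I, Complex.conj_ofReal, map_ofNat]; ring]
    rw [neg_add_cancel, Complex.exp_zero]
  have hπ1 : π (1 : A) = 0 := by
    simp [π, Submodule.Quotient.mk_eq_zero, Submodule.mem_span_singleton_self]
  have s0 : (finSumFinEquiv.symm (0 : Fin 4) : Fin 2 ⊕ Fin 2) = Sum.inl 0 := by decide
  have s1 : (finSumFinEquiv.symm (1 : Fin 4) : Fin 2 ⊕ Fin 2) = Sum.inl 1 := by decide
  have s2 : (finSumFinEquiv.symm (2 : Fin 4) : Fin 2 ⊕ Fin 2) = Sum.inr 0 := by decide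
  have s3 : (finSumFinEquiv.symm (3 : Fin 4) : Fin 2 ⊕ Fin 2) = Sum.inr 1 := by decide
  simp only [Fin.sum_univ_four, e, q, Matrix.sub_apply, Matrix.smul_apply,
    Matrix.reindex_apply, Matrix.submatrix_apply, s0, s1, s2, s3,
    Matrix.fromBlocks_apply₁₁, Matrix.fromBlocks_apply₁₂, Matrix.fromBlocks_apply₂₁,
    Matrix.fromBlocks_apply₂₂, Matrix.one_apply, Matrix.conjTranspose_apply,
    Matrix.cons_val', Matrix.cons_val_zero, Matrix.cons_val_one, Matrix.head_cons,
    Matrix.head_fin_const, Matrix.empty_val', Matrix.cons_val_fin_one,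
    Fin.isValue, Fin.reduceEq, reduceIte]
  norm_num
  simp only [smul_add, smul_sub, smul_smul, star_add, star_sub, star_one, star_smul,
    hz, star_star, map_add, map_sub, _root_.map_smul, map_neg, map_zero, hπ1,
    smul_zero, zero_sub, sub_zero, zero_add, add_zero, neg_neg, smul_neg, neg_smul,
    TensorProduct.tmul_add, TensorProduct.add_tmul, TensorProduct.tmul_sub,
    TensorProduct.sub_tmul, TensorProduct.tmul_neg, TensorProduct.neg_tmul,
    TensorProduct.smul_tmul, TensorProduct.tmul_smul, TensorProduct.zero_tmul,
    TensorProduct.tmul_zero]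
  match_scalars <;> first
    | ring1
    | linear_combination (8 : ℂ)⁻¹ * hc
    | linear_combination (-(8 : ℂ)⁻¹) * hc
end

section
/- Let B be a unital *-algebra over ℂ and let z⁰, z¹, z², z³ ∈ B. Let σ₁, σ₂, σ₃ ∈ Mat₂(ℂ) be the standard Pauli matrices and set u := z⁰·I₂ + i·Σ_{k=1}^{3} σ_k z^k ∈ Mat₂(B). Then u u* = u* u = I₂ (where u* is the conjugate transpose) if and only if the following relations hold: for each k = 1, 2, 3 (with (k,l,m) the cyclic permutation of (1,2,3) starting at k): z^k z^{0*} − z⁰ z^{k*} + Σ_{l,m} ε_{klm} z^l z^{m*} = 0; z^{0*} z^k − z^{k*} z⁰ + Σ_{l,m} ε_{klm} z^{l*} z^m = 0; Σ_{μ=0}^{3} (z^μ z^{μ*} − z^{μ*} z^μ) = 0; and Σ_{μ=0}^{3} z^{μ*} z^μ = 1. -/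
open Matrix

private lemma smul_cancel_aux {M : Type*} [AddCommGroup M] [Module ℂ M] (c : ℂ) (hc : c ≠ 0)
    {x : M} (h : c • x = 0) : x = 0 := by
  have := congrArg (c⁻¹ • ·) h
  simpa [smul_smul, inv_mul_cancel₀ hc] using this

/-- The 2×2 matrix `u = z⁰·I₂ + i·Σ σ_k z^k` over a unital *-algebra `B` (σ_k the
Pauli matrices) is unitary if and only if the defining relations of the
noncommutative 3-spheres hold. -/
theorem matrix_unitary_iff_sphere3_relations
    (B : Type*) [Ring B] [Algebra ℂ B] [StarRing B] [StarModule ℂ B]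
    (z : Fin 4 → B) :
    let σ1 : Matrix (Fin 2) (Fin 2) ℂ := !![0, 1; 1, 0]
    let σ2 : Matrix (Fin 2) (Fin 2) ℂ := !![0, -Complex.I; Complex.I, 0]
    let σ3 : Matrix (Fin 2) (Fin 2) ℂ := !![1, 0; 0, -1]
    let mat : Matrix (Fin 2) (Fin 2) ℂ → B → Matrix (Fin 2) (Fin 2) B :=
      fun σ b => Matrix.of fun a c => σ a c • b
    let u : Matrix (Fin 2) (Fin 2) B :=
      mat 1 (z 0) + Complex.I • (mat σ1 (z 1) + mat σ2 (z 2) + mat σ3 (z 3))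
    (u * uᴴ = 1 ∧ uᴴ * u = 1) ↔
      ((z 1 * star (z 0) - z 0 * star (z 1) + (z 2 * star (z 3) - z 3 * star (z 2)) = 0) ∧
        (z 2 * star (z 0) - z 0 * star (z 2) + (z 3 * star (z 1) - z 1 * star (z 3)) = 0) ∧
        (z 3 * star (z 0) - z 0 * star (z 3) + (z 1 * star (z 2) - z 2 * star (z 1)) = 0) ∧
        (star (z 0) * z 1 - star (z 1) * z 0 + (star (z 2) * z 3 - star (z 3) * z 2) = 0) ∧
        (star (z 0) * z 2 - star (z 2) * z 0 + (star (z 3) * z 1 - star (z 1) * z 3) = 0) ∧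
        (star (z 0) * z 3 - star (z 3) * z 0 + (star (z 1) * z 2 - star (z 2) * z 1) = 0) ∧
        (∑ μ : Fin 4, (z μ * star (z μ) - star (z μ) * z μ) = 0) ∧
        (∑ μ : Fin 4, star (z μ) * z μ = 1)) := by
  intro σ1 σ2 σ3 mat u
  have h2I : (2 * Complex.I : ℂ) ≠ 0 := by simp [Complex.I_ne_zero]
  have h2 : (2 : ℂ) ≠ 0 := two_ne_zero
  have hiff : (u * uᴴ = 1 ∧ uᴴ * u = 1) ↔
      (((u * uᴴ) 0 0 = 1 ∧ (u * uᴴ) 0 1 = 0) ∧ ((u * uᴴ) 1 0 = 0 ∧ (u * uᴴ) 1 1 = 1)) ∧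
      (((uᴴ * u) 0 0 = 1 ∧ (uᴴ * u) 0 1 = 0) ∧ ((uᴴ * u) 1 0 = 0 ∧ (uᴴ * u) 1 1 = 1)) := by
    constructor
    · rintro ⟨h1, h2⟩; rw [h1, h2]; norm_num [Matrix.one_apply]
    · rintro ⟨⟨⟨a,b⟩,⟨c,d⟩⟩,⟨⟨e,f⟩,⟨g,h⟩⟩⟩
      constructor <;> ext i j <;> fin_cases i <;> fin_cases j <;>
        simp_all [Matrix.one_apply]
  rw [hiff]
  simp only [Matrix.mul_apply, Fin.sum_univ_two, Matrix.conjTranspose_apply, u, mat, σ1, σ2, σ3,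
    Matrix.add_apply, Matrix.smul_apply, Matrix.one_apply, Matrix.of_apply, Matrix.cons_val',
    Matrix.cons_val_zero, Matrix.cons_val_one, Matrix.head_cons, Matrix.head_fin_const,
    Matrix.empty_val', Matrix.cons_val_fin_one]
  norm_num [star_smul, smul_smul, Complex.ext_iff, smul_add, mul_add, add_mul, smul_mul_assoc,
    mul_smul_comm]
  simp only [Fin.sum_univ_four]
  constructor
  · rintro ⟨⟨⟨e1, e2⟩, e3, e4⟩, ⟨e5, e6⟩, e7, e8⟩
    refine ⟨?_, ?_, ?_, ?_, ?_, ?_, ?_, ?_⟩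
    · refine smul_cancel_aux (2 * Complex.I) h2I ?_
      linear_combination (norm := module) e2 + e3
    · refine smul_cancel_aux 2 h2 ?_
      linear_combination (norm := module) e2 - e3
    · refine smul_cancel_aux (2 * Complex.I) h2I ?_
      linear_combination (norm := module) e1 - e4
    · refine smul_cancel_aux (2 * Complex.I) h2I ?_
      linear_combination (norm := module) e6 + e7
    · refine smul_cancel_aux 2 h2 ?_
      linear_combination (norm := module) e6 - e7
    · refine smul_cancel_aux (2 * Complex.I) h2I ?_
      linear_combination (norm := module) e5 - e8
    · refine smul_cancel_aux 2 h2 ?_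
      linear_combination (norm := module) e1 + e4 - e5 - e8
    · rw [← sub_eq_zero]
      refine smul_cancel_aux 2 h2 ?_
      linear_combination (norm := module) e5 + e8
  · rintro ⟨r1, r2, r3, r4, r5, r6, r7, r8⟩
    refine ⟨⟨⟨?_, ?_⟩, ?_, ?_⟩, ⟨?_, ?_⟩, ?_, ?_⟩
    · linear_combination (norm := module) r7 + r8 + Complex.I • r3
    · linear_combination (norm := module) r2 + Complex.I • r1
    · linear_combination (norm := module) Complex.I • r1 - r2
    · linear_combination (norm := module) r7 + r8 - Complex.I • r3
    · linear_combination (norm := module) r8 + Complex.I • r6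
    · linear_combination (norm := module) r5 + Complex.I • r4
    · linear_combination (norm := module) Complex.I • r4 - r5
    · linear_combination (norm := module) r8 - Complex.I • r6
end

section
/- Let R be a unital algebra over ℂ, λ ∈ ℂ nonzero, and V, W commuting invertible elements of R. Let x, y ∈ R and n₁, n₂, n₁', n₂' ∈ ℤ be such that V x = λ^{n₁} x V, W x = λ^{n₂} x W, V y = λ^{n₁'} y V, and W y = λ^{n₂'} y W. Define l(x) := x V^{n₂} and r(y) := W^{n₁'} y. Then l(x) r(y) − r(y) l(x) = λ^{n₁'(n₂ + n₂')} (x y − y x) V^{n₂} W^{n₁'}. In particular, if x and y commute then l(x) and r(y) commute. -/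
/-!
With `a = V ^ n₂` and `b = W ^ n₁'`, the relations integrate to `a y = λ^{n₁' n₂} y a`,
`b y = λ^{n₁' n₂'} y b` and `b x = λ^{n₁' n₂} x b`. Moving `a` and `b` to the right in
`x a b y` and in `b y x a` (using `a b = b a`) produces the same scalar `λ^{n₁'(n₂ + n₂')}` in
both products, in front of `x y a b` and `y x a b` respectively.
-/

/-- The hypothesis says that `x` semiconjugates the unit `c U` to `U`; since scalars are central,
`(c U) ^ m = c ^ m U ^ m`. -/
theorem units_zpow_mul_eq_smul_of_mul_eq_smul {K R : Type*} [Semifield K] [Semiring R]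
    [Algebra K R] {c : K} (hc : c ≠ 0) {U : Rˣ} {x : R} (h : U * x = c • (x * U)) (m : ℤ) :
    ↑(U ^ m) * x = c ^ m • (x * ↑(U ^ m)) := by
  lift c to Kˣ using hc.isUnit
  let C : Rˣ := Units.map (algebraMap K R : K →* R) c
  have hC : ↑C = algebraMap K R c := rfl
  have hsemi : SemiconjBy x ↑(C * U) ↑U := by
    rw [SemiconjBy, h, Units.val_mul, hC, Algebra.smul_def, Algebra.left_comm]
  have hCU : Commute C U := Units.ext (Algebra.commutes _ _)
  rw [← (hsemi.units_zpow_right m).eq, hCU.mul_zpow, Units.val_mul, ← map_zpow, Units.coe_map,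
    MonoidHom.coe_coe, Algebra.smul_def, Algebra.left_comm, Units.val_zpow_eq_zpow_val]

section TwistedProducts

variable {K R : Type*} [CommSemiring K] [Semiring R] [Algebra K R] {x y a b : R} {c d : K}

theorem mul_mul_mul_eq_smul_of_mul_eq_smul (hay : a * y = c • (y * a))
    (hby : b * y = d • (y * b)) :
    (x * a) * (b * y) = (c * d) • (x * y * (a * b)) := by
  calc (x * a) * (b * y) = d • (x * (a * y) * b) := by
        rw [mul_assoc, hby, mul_smul_comm, mul_smul_comm, ← mul_assoc a, ← mul_assoc]
    _ = (c * d) • (x * y * (a * b)) := by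
        rw [hay, mul_smul_comm, smul_mul_assoc, smul_smul, mul_comm d, ← mul_assoc x,
          mul_assoc _ a]

theorem mul_mul_mul_swap_eq_smul_of_mul_eq_smul (hab : Commute a b) (hby : b * y = d • (y * b))
    (hbx : b * x = c • (x * b)) :
    (b * y) * (x * a) = (c * d) • (y * x * (a * b)) := by
  calc (b * y) * (x * a) = d • (y * (b * x) * a) := by
        rw [hby, smul_mul_assoc, mul_assoc y, ← mul_assoc b, mul_assoc y]
    _ = (c * d) • (y * x * (a * b)) := by
        rw [hbx, mul_smul_comm, smul_mul_assoc, smul_smul, mul_comm d, ← mul_assoc y,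
          mul_assoc _ b, hab.eq]

end TwistedProducts

theorem commutator_mul_mul_eq_smul {K R : Type*} [CommSemiring K] [Ring R] [Algebra K R]
    {x y a b : R} {c d : K} (hab : Commute a b) (hay : a * y = c • (y * a))
    (hby : b * y = d • (y * b)) (hbx : b * x = c • (x * b)) :
    (x * a) * (b * y) - (b * y) * (x * a) = (c * d) • ((x * y - y * x) * (a * b)) := by
  rw [mul_mul_mul_eq_smul_of_mul_eq_smul hay hby,
    mul_mul_mul_swap_eq_smul_of_mul_eq_smul hab hby hbx, ← smul_sub, sub_mul]

theorem left_right_twist_commutator_general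
    (R : Type*) [Ring R] [Algebra ℂ R] (lam : ℂ) (hlam : lam ≠ 0)
    (V W : Rˣ) (hVW : Commute (V : R) (W : R))
    (x y : R) (n₂ n₁' n₂' : ℤ)
    (hWx : (W : R) * x = lam ^ n₂ • (x * (W : R)))
    (hVy : (V : R) * y = lam ^ n₁' • (y * (V : R)))
    (hWy : (W : R) * y = lam ^ n₂' • (y * (W : R))) :
    (x * ((V ^ n₂ : Rˣ) : R)) * (((W ^ n₁' : Rˣ) : R) * y)
        - (((W ^ n₁' : Rˣ) : R) * y) * (x * ((V ^ n₂ : Rˣ) : R))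
      = lam ^ (n₁' * (n₂ + n₂')) •
          ((x * y - y * x) * (((V ^ n₂ : Rˣ) : R) * ((W ^ n₁' : Rˣ) : R))) ∧
    (x * y = y * x →
      (x * ((V ^ n₂ : Rˣ) : R)) * (((W ^ n₁' : Rˣ) : R) * y)
        = (((W ^ n₁' : Rˣ) : R) * y) * (x * ((V ^ n₂ : Rˣ) : R))) := by
  have hay := units_zpow_mul_eq_smul_of_mul_eq_smul (zpow_ne_zero n₁' hlam) hVy n₂
  have hby := units_zpow_mul_eq_smul_of_mul_eq_smul (zpow_ne_zero n₂' hlam) hWy n₁'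
  have hbx := units_zpow_mul_eq_smul_of_mul_eq_smul (zpow_ne_zero n₂ hlam) hWx n₁'
  rw [← zpow_mul] at hay hby hbx
  rw [mul_comm n₂] at hbx
  have hab : Commute ((V ^ n₂ : Rˣ) : R) ((W ^ n₁' : Rˣ) : R) :=
    (hVW.units_zpow_right n₁').units_zpow_left n₂
  have hcomm := commutator_mul_mul_eq_smul hab hay hby hbx
  rw [← zpow_add₀ hlam, show n₁' * n₂ + n₂' * n₁' = n₁' * (n₂ + n₂') by ring] at hcomm
  refine ⟨hcomm, fun hxy => sub_eq_zero.mp ?_⟩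
  rw [hcomm, hxy, sub_self, zero_mul, smul_zero]

/-- Lemma 1(b) of the isospectral-deformation construction: for commuting invertibles
`V, W` and homogeneous `x, y`, the commutator of the left twist `l(x) = x V^{n₂}` and
the right twist `r(y) = W^{n₁'} y` equals
`λ^{n₁'(n₂+n₂')} (xy − yx) V^{n₂} W^{n₁'}`; in particular `[x, y] = 0` implies
`[l(x), r(y)] = 0`. -/
theorem left_right_twist_commutator
    (R : Type*) [Ring R] [Algebra ℂ R] (lam : ℂ) (hlam : lam ≠ 0)
    (V W : Rˣ) (hVW : Commute (V : R) (W : R))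
    (x y : R) (n₁ n₂ n₁' n₂' : ℤ)
    (hVx : (V : R) * x = lam ^ n₁ • (x * (V : R)))
    (hWx : (W : R) * x = lam ^ n₂ • (x * (W : R)))
    (hVy : (V : R) * y = lam ^ n₁' • (y * (V : R)))
    (hWy : (W : R) * y = lam ^ n₂' • (y * (W : R))) :
    (x * ((V ^ n₂ : Rˣ) : R)) * (((W ^ n₁' : Rˣ) : R) * y)
        - (((W ^ n₁' : Rˣ) : R) * y) * (x * ((V ^ n₂ : Rˣ) : R))
      = lam ^ (n₁' * (n₂ + n₂')) •
          ((x * y - y * x) * (((V ^ n₂ : Rˣ) : R) * ((W ^ n₁' : Rˣ) : R))) ∧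
    (x * y = y * x →
      (x * ((V ^ n₂ : Rˣ) : R)) * (((W ^ n₁' : Rˣ) : R) * y)
        = (((W ^ n₁' : Rˣ) : R) * y) * (x * ((V ^ n₂ : Rˣ) : R))) :=
  left_right_twist_commutator_general R lam hlam V W hVW x y n₂ n₁' n₂' hWx hVy hWy
end

section
/- Let A be a unital *-algebra, q a nonzero real number, and x₀ = x₀*, x₁, …, xₙ ∈ A satisfying x_i x_j = q x_j x_i for 0 ≤ i < j ≤ n, x_i* x_j = q x_j x_i* for i ≠ j, and x_i x_i* − x_i* x_i = (1 − q^{−2}) s_{i−1} for 1 ≤ i ≤ n, where s₀ := x₀² and s_i := s_{i−1} + x_i* x_i. Then for all 0 ≤ i, j ≤ n: s_i x_j = q² x_j s_i and s_i x_j* = q^{−2} x_j* s_i whenever i < j; s_i x_j = x_j s_i and s_i x_j* = x_j* s_i whenever i ≥ j; and the elements s₀, …, sₙ pairwise commute. In particular sₙ commutes with every generator. -/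
/-!
Call `a` and `b` `r`-commuting if `a * b = r • (b * a)`. This relation is stable under sums and
multiplies under products, so `s_i` inherits its relation with `x_j` from those of `x_0²` and
of the summands `x_k* x_k`: for `k < j` these pick up `q · q`, for `k > j` they pick up
`q · q⁻¹ = 1`. In the remaining case `k = j` the defining relation
`x_j x_j* − x_j* x_j = (1 − q⁻²) s_{j−1}` exactly compensates the factor `q²` between
`s_{j−1}` and `x_j`. The relations with `x_j*` follow by applying `star`, as the `s_i` are
self-adjoint, and the `s_i` pairwise commute since each of them is built from generators that
the others commute with.

The algebra need not be a `StarModule`: `star (r • a) = star (algebraMap r) * star a`, where the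
central factor need not act as `r`. It does act as `r` on the products `x_a x_b*` with `a ≠ b`,
and this suffices to move `x_j*` past `x_k* x_k`.
-/

/-- The partial radii `s₀ = x₀²`, `s_i = s_{i−1} + x_i* x_i` of the quantum
Euclidean sphere `S_q^{2n}`. -/
def partialRadius {A : Type*} [Ring A] [Star A] (x : ℕ → A) : ℕ → A
  | 0 => x 0 ^ 2
  | (i + 1) => partialRadius x i + star (x (i + 1)) * x (i + 1)

def QCommute {R A : Type*} [CommSemiring R] [Semiring A] [Algebra R A] (r : R) (a b : A) :
    Prop :=
  a * b = r • (b * a)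

section QCommute

variable {R A : Type*} [CommSemiring R] [Semiring A] [Algebra R A] {r s : R} {a b c : A}

theorem qCommute_one_iff : QCommute (1 : R) a b ↔ Commute a b := by
  rw [QCommute, one_smul]
  rfl

theorem QCommute.add_left (ha : QCommute r a c) (hb : QCommute r b c) :
    QCommute r (a + b) c := by
  rw [QCommute, add_mul, ha, hb, mul_add, smul_add]

theorem QCommute.mul_left (ha : QCommute r a c) (hb : QCommute s b c) :
    QCommute (r * s) (a * b) c :=
  calc a * b * c = s • (a * c * b) := by rw [mul_assoc, hb, mul_smul_comm, mul_assoc]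
    _ = (r * s) • (c * (a * b)) := by
      rw [ha, smul_mul_assoc, smul_smul, mul_comm s r, mul_assoc]

theorem QCommute.symm {K : Type*} [Field K] [Algebra K A] {r : K} (hr : r ≠ 0)
    (h : QCommute r a b) : QCommute r⁻¹ b a := by
  rw [QCommute, h, smul_smul, inv_mul_cancel₀ hr, one_smul]

theorem commute_add_mul_of_sub_eq {K A : Type*} [Field K] [Ring A] [Algebra K A] {r : K}
    {S X Y : A} (hr : r ≠ 0) (hS : QCommute r S X) (hXY : X * Y - Y * X = (1 - r⁻¹) • S) :
    Commute (S + Y * X) X := by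
  have hXY' : X * Y = Y * X + (1 - r⁻¹) • S := sub_eq_iff_eq_add'.mp hXY
  change (S + Y * X) * X = X * (S + Y * X)
  rw [add_mul, mul_add, ← mul_assoc X Y X, hXY', add_mul, smul_mul_assoc, hS, smul_smul,
    sub_mul, one_mul, inv_mul_cancel₀ hr, sub_smul, one_smul, mul_assoc]
  abel

end QCommute

section Star

variable {R A : Type*} [CommSemiring R] [Semiring A] [StarRing A] [Algebra R A] {r : R} {a b : A}

theorem commute_star_algebraMap (r : R) (a : A) : Commute (star (algebraMap R A r)) a := by
  simpa only [star_star] using (Algebra.commute_algebraMap_left r (star a)).star_star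

theorem star_smul_eq_star_algebraMap_mul (r : R) (a : A) :
    star (r • a) = star (algebraMap R A r) * star a := by
  rw [Algebra.smul_def, star_mul]
  exact (commute_star_algebraMap r (star a)).eq.symm

theorem star_algebraMap_mul_mul_star (h₁ : QCommute r (star a) b) (h₂ : QCommute r (star b) a) :
    star (algebraMap R A r) * (a * star b) = r • (a * star b) := by
  have h := congrArg star h₁
  rw [star_mul, star_star, star_smul_eq_star_algebraMap_mul, star_mul, star_star] at h
  rw [← h]
  exact h₂

theorem QCommute.star_star_mul_self (hab : QCommute r a b) (h₁ : QCommute r (star a) b)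
    (h₂ : QCommute r (star b) a) : QCommute (r ^ 2) (star b) (star a * a) := by
  have hstar : star b * star a = star (algebraMap R A r) * (star a * star b) := by
    have h := congrArg star hab
    rwa [star_mul, star_smul_eq_star_algebraMap_mul, star_mul] at h
  calc star b * (star a * a)
      = star a * (star (algebraMap R A r) * (star b * a)) := by
        rw [← mul_assoc, hstar, mul_assoc, mul_assoc, (commute_star_algebraMap r _).left_comm]
    _ = r ^ 2 • (star a * a * star b) := by
        rw [h₂, mul_smul_comm, star_algebraMap_mul_mul_star h₁ h₂, smul_smul, ← sq,
          mul_smul_comm, mul_assoc]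

end Star

section PartialRadius

variable {A : Type*} [Ring A] [StarRing A] {x : ℕ → A}

theorem isSelfAdjoint_partialRadius (hx0 : IsSelfAdjoint (x 0)) :
    ∀ i, IsSelfAdjoint (partialRadius x i)
  | 0 => hx0.pow 2
  | i + 1 => (isSelfAdjoint_partialRadius hx0 i).add (.star_mul_self _)

theorem commute_partialRadius_of_commute {s : A} {j : ℕ} (h : ∀ k ≤ j, Commute s (x k))
    (h' : ∀ k ≤ j, Commute s (star (x k))) : Commute s (partialRadius x j) := by
  induction j with
  | zero => exact (h 0 le_rfl).pow_right 2
  | succ j ih =>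
    have hs := ih (fun k hk => h k (hk.trans j.le_succ)) (fun k hk => h' k (hk.trans j.le_succ))
    exact hs.add_right ((h' _ le_rfl).mul_right (h _ le_rfl))

theorem QCommute.partialRadius_of_le {R : Type*} [CommSemiring R] [Algebra R A] {r : R} {y : A}
    {i j : ℕ}
    (hj : QCommute r (partialRadius x j) y)
    (hstep : ∀ k, j < k → k ≤ i → QCommute r (star (x k) * x k) y) (hji : j ≤ i) :
    QCommute r (partialRadius x i) y := by
  induction i, hji using Nat.le_induction with
  | base => exact hj
  | succ k hjk ih =>
    exact (ih fun l hjl hlk => hstep l hjl (hlk.trans k.le_succ)).add_left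
      (hstep (k + 1) (Nat.lt_succ_of_le hjk) le_rfl)

variable {K : Type*} [Field K] [Algebra K A] {q : K} {n : ℕ}

theorem qCommute_partialRadius_of_lt (hcomm : ∀ i j, i < j → j ≤ n → QCommute q (x i) (x j))
    (hstar : ∀ i j, i ≤ n → j ≤ n → i ≠ j → QCommute q (star (x i)) (x j)) {i j : ℕ}
    (hij : i < j) (hj : j ≤ n) : QCommute (q ^ 2) (partialRadius x i) (x j) := by
  refine QCommute.partialRadius_of_le (j := 0) ?_ (fun k _ hki => ?_) (Nat.zero_le i)
  · rw [partialRadius, sq, sq]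
    exact (hcomm 0 j (by omega) hj).mul_left (hcomm 0 j (by omega) hj)
  · rw [sq]
    exact (hstar k j (by omega) hj (by omega)).mul_left (hcomm k j (by omega) hj)

theorem qCommute_partialRadius_star_of_lt (hq : q ≠ 0)
    (hcomm : ∀ i j, i < j → j ≤ n → QCommute q (x i) (x j))
    (hstar : ∀ i j, i ≤ n → j ≤ n → i ≠ j → QCommute q (star (x i)) (x j)) {i j : ℕ}
    (hij : i < j) (hj : j ≤ n) : QCommute (q⁻¹ ^ 2) (partialRadius x i) (star (x j)) := by
  refine QCommute.partialRadius_of_le (j := 0) ?_ (fun k _ hki => ?_) (Nat.zero_le i)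
  · have h := (hstar j 0 hj (by omega) (by omega)).symm hq
    rw [partialRadius, sq, sq]
    exact h.mul_left h
  · rw [inv_pow]
    exact ((hcomm k j (by omega) hj).star_star_mul_self (hstar k j (by omega) hj (by omega))
      (hstar j k hj (by omega) (by omega))).symm (pow_ne_zero 2 hq)

theorem commute_partialRadius_of_le (hq : q ≠ 0)
    (hcomm : ∀ i j, i < j → j ≤ n → QCommute q (x i) (x j))
    (hstar : ∀ i j, i ≤ n → j ≤ n → i ≠ j → QCommute q (star (x i)) (x j))
    (hrel : ∀ i, i < n → x (i + 1) * star (x (i + 1)) - star (x (i + 1)) * x (i + 1)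
      = (1 - q⁻¹ ^ 2) • partialRadius x i) {i j : ℕ} (hji : j ≤ i) (hi : i ≤ n) :
    Commute (partialRadius x i) (x j) := by
  rw [← qCommute_one_iff (R := K)]
  refine QCommute.partialRadius_of_le ?_ (fun k hjk hki => ?_) hji
  · rw [qCommute_one_iff]
    rcases j with _ | m
    · exact (Commute.refl _).pow_left 2
    · refine commute_add_mul_of_sub_eq (pow_ne_zero 2 hq)
        (qCommute_partialRadius_of_lt hcomm hstar m.lt_succ_self (by omega)) ?_
      rw [← inv_pow]
      exact hrel m (by omega)
  · have h := (hstar k j (by omega) (by omega) (by omega)).mul_left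
      ((hcomm j k hjk (by omega)).symm hq)
    rwa [mul_inv_cancel₀ hq] at h

end PartialRadius

/-- Commutation properties of the partial radii of the quantum Euclidean sphere
`S_q^{2n}`: `s_i x_j = q² x_j s_i` and `s_i x_j* = q^{−2} x_j* s_i` for `i < j`,
`s_i` commutes with `x_j, x_j*` for `i ≥ j`, the `s_i` pairwise commute, and in
particular `s_n` commutes with every generator. -/
theorem partialRadius_commutation
    (A : Type*) [Ring A] [Algebra ℝ A] [StarRing A]
    (q : ℝ) (hq : q ≠ 0) (n : ℕ) (x : ℕ → A)
    (hx0 : star (x 0) = x 0)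
    (hcomm : ∀ i j, i < j → j ≤ n → x i * x j = q • (x j * x i))
    (hstar : ∀ i j, i ≤ n → j ≤ n → i ≠ j → star (x i) * x j = q • (x j * star (x i)))
    (hrel : ∀ i, i < n →
      x (i + 1) * star (x (i + 1)) - star (x (i + 1)) * x (i + 1)
        = (1 - q⁻¹ ^ 2) • partialRadius x i) :
    (∀ i j, i < j → j ≤ n →
      partialRadius x i * x j = q ^ 2 • (x j * partialRadius x i) ∧
      partialRadius x i * star (x j) = q⁻¹ ^ 2 • (star (x j) * partialRadius x i)) ∧
    (∀ i j, j ≤ i → i ≤ n →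
      partialRadius x i * x j = x j * partialRadius x i ∧
      partialRadius x i * star (x j) = star (x j) * partialRadius x i) ∧
    (∀ i j, i ≤ n → j ≤ n → Commute (partialRadius x i) (partialRadius x j)) ∧
    (∀ j, j ≤ n → Commute (partialRadius x n) (x j) ∧
      Commute (partialRadius x n) (star (x j))) := by
  have hx : ∀ i j, j ≤ i → i ≤ n → Commute (partialRadius x i) (x j) :=
    fun i j hji hi => commute_partialRadius_of_le hq hcomm hstar hrel hji hi
  have hy : ∀ i j, j ≤ i → i ≤ n → Commute (partialRadius x i) (star (x j)) := by
    intro i j hji hi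
    simpa only [(isSelfAdjoint_partialRadius hx0 i).star_eq] using (hx i j hji hi).star_star
  have hs : ∀ i j, j ≤ i → i ≤ n → Commute (partialRadius x i) (partialRadius x j) :=
    fun i j hji hi => commute_partialRadius_of_commute
      (fun k hk => hx i k (hk.trans hji) hi) (fun k hk => hy i k (hk.trans hji) hi)
  refine ⟨fun i j hij hj => ⟨qCommute_partialRadius_of_lt hcomm hstar hij hj,
      qCommute_partialRadius_star_of_lt hq hcomm hstar hij hj⟩,
    fun i j hji hi => ⟨hx i j hji hi, hy i j hji hi⟩, fun i j hi hj => ?_,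
    fun j hj => ⟨hx n j hj le_rfl, hy n j hj le_rfl⟩⟩
  rcases le_total j i with hji | hij
  · exact hs i j hji hi
  · exact (hs j i hij hj).symm
end

section
/- Let A be a unital C*-algebra, let q be a real number with |q| > 1, and let x₀, x₁ ∈ A with x₀ = x₀*, x₀² + x₁* x₁ = 1, and q^{−2} x₀² + x₁ x₁* = 1. Then either x₀ = 0, or the spectrum of x₀² equals {0} ∪ {q^{−2k} : k ∈ ℕ}. -/
/-!
With `x = x₁`, the identity `{0} ∪ Spec(x*x) = {0} ∪ Spec(xx*)` turns the two sphere
relations into `{1} ∪ T = {1} ∪ c • T` for `T = Spec(x₀²) ⊆ [0, 1]` and `c = q⁻² < 1`.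
So multiplication by `c` maps `T` into itself and division by `c` maps `T \ {1}` into `T`.
The largest point of `T` cannot be divided by `c` without leaving `T`, so it is `1`; hence
all `cᵏ` and their limit `0` lie in `T`. A positive point other than the `cᵏ` could be
divided by `c` indefinitely, escaping `[0, 1]`.
-/

open Set Filter Pointwise

namespace Set

variable {T : Set ℝ} {c : ℝ}

lemma mul_mem_of_insert_one_eq_smul (hc0 : 0 ≤ c) (hc1 : c < 1) (hT : T ⊆ Icc 0 1)
    (h : insert 1 T = insert 1 (c • T)) {s : ℝ} (hs : s ∈ T) : c * s ∈ T := by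
  have hcs : c * s ∈ insert 1 T := h ▸ mem_insert_of_mem _ (smul_mem_smul_set hs)
  have : c * s < 1 := by nlinarith [(hT hs).2]
  exact hcs.resolve_left this.ne

lemma div_mem_of_insert_one_eq_smul (hc0 : c ≠ 0) (h : insert 1 T = insert 1 (c • T))
    {t : ℝ} (ht : t ∈ T) (ht1 : t ≠ 1) : t / c ∈ T := by
  have ht' : t ∈ insert 1 (c • T) := h ▸ mem_insert_of_mem 1 ht
  obtain ⟨s, hs, rfl⟩ := ht'.resolve_left ht1
  simpa [hc0] using hs

lemma one_mem_of_insert_one_eq_smul (hc0 : 0 < c) (hc1 : c < 1) (hTc : IsClosed T)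
    (hT : T ⊆ Icc 0 1) (hpos : ∃ t ∈ T, 0 < t) (h : insert 1 T = insert 1 (c • T)) :
    (1 : ℝ) ∈ T := by
  obtain ⟨t, ht, ht0⟩ := hpos
  have hbdd : BddAbove T := bddAbove_Icc.mono hT
  have hmax : sSup T ∈ T :=
    (isCompact_Icc.of_isClosed_subset hTc hT).sSup_mem ⟨t, ht⟩
  by_contra h1
  have hmc : sSup T / c ∈ T :=
    div_mem_of_insert_one_eq_smul hc0.ne' h hmax (fun h' => h1 (h' ▸ hmax))
  have hm_pos : 0 < sSup T := ht0.trans_le (le_csSup hbdd ht)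
  have : sSup T < sSup T / c := (lt_div_iff₀ hc0).2 (mul_lt_of_lt_one_right hm_pos hc1)
  exact this.not_ge (le_csSup hbdd hmc)

lemma pow_mem_of_insert_one_eq_smul (hc0 : 0 < c) (hc1 : c < 1) (hTc : IsClosed T)
    (hT : T ⊆ Icc 0 1) (hpos : ∃ t ∈ T, 0 < t) (h : insert 1 T = insert 1 (c • T)) (k : ℕ) :
    c ^ k ∈ T := by
  induction k with
  | zero => simpa using one_mem_of_insert_one_eq_smul hc0 hc1 hTc hT hpos h
  | succ k ih =>
    simpa [pow_succ', mul_comm] using mul_mem_of_insert_one_eq_smul hc0.le hc1 hT h ih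

lemma exists_eq_pow_of_insert_one_eq_smul (hc0 : 0 < c) (hc1 : c < 1)
    (hT : T ⊆ Icc 0 1) (h : insert 1 T = insert 1 (c • T)) {t : ℝ} (ht : t ∈ T) (ht0 : 0 < t) :
    ∃ k : ℕ, t = c ^ k := by
  by_contra! hne
  have hdiv : ∀ k : ℕ, t / c ^ k ∈ T := by
    intro k
    induction k with
    | zero => simpa using ht
    | succ k ih =>
      have hk : t / c ^ k ≠ 1 := by
        rw [Ne, div_eq_one_iff_eq (pow_pos hc0 k).ne']; exact hne k
      simpa [pow_succ, div_div] using div_mem_of_insert_one_eq_smul hc0.ne' h ih hk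
  have hle : ∀ k : ℕ, t ≤ c ^ k := fun k =>
    (div_le_one (pow_pos hc0 k)).1 (hT (hdiv k)).2
  exact ht0.not_ge (ge_of_tendsto' (tendsto_pow_atTop_nhds_zero_of_lt_one hc0.le hc1) hle)

theorem eq_insert_zero_range_pow_of_insert_one_eq_smul (hc0 : 0 < c) (hc1 : c < 1)
    (hTc : IsClosed T) (hT : T ⊆ Icc 0 1) (hpos : ∃ t ∈ T, 0 < t)
    (h : insert 1 T = insert 1 (c • T)) : T = insert 0 (range (c ^ ·)) := by
  have hpow := pow_mem_of_insert_one_eq_smul hc0 hc1 hTc hT hpos h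
  refine Subset.antisymm (fun t ht => ?_) (insert_subset ?_ (range_subset_iff.2 hpow))
  · rcases (hT ht).1.eq_or_lt with rfl | ht0
    · exact mem_insert _ _
    · obtain ⟨k, rfl⟩ := exists_eq_pow_of_insert_one_eq_smul hc0 hc1 hT h ht ht0
      exact mem_insert_of_mem _ ⟨k, rfl⟩
  · exact hTc.mem_of_tendsto (tendsto_pow_atTop_nhds_zero_of_lt_one hc0.le hc1)
      (Eventually.of_forall hpow)

end Set

lemma spectrum.insert_one_eq_of_add_mul_eq_one {𝕜 A : Type*} [Field 𝕜] [Ring A] [Algebra 𝕜 A]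
    {a b y z : A} (hy : y + a * b = 1) (hz : z + b * a = 1) :
    insert 1 (spectrum 𝕜 y) = insert 1 (spectrum 𝕜 z) := by
  have one_sub : ∀ {u v w : A}, w + u * v = 1 →
      insert 1 (spectrum 𝕜 w) = {1} - insert 0 (spectrum 𝕜 (u * v) \ {0}) := by
    intro u v w hw
    rw [insert_sdiff_singleton, eq_sub_of_add_eq hw, ← map_one (algebraMap 𝕜 A),
      ← spectrum.singleton_sub_eq]
    ext t
    simp [eq_comm]
  rw [one_sub hy, one_sub hz, spectrum.nonzero_mul_comm]

lemma spectrum_star_mul_self_subset_Icc_of_add_eq_one {A : Type*} [CStarAlgebra A] {x y : A}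
    (h : star x * x + star y * y = 1) :
    spectrum ℝ (star x * x) ⊆ Icc 0 1 := by
  intro t ht
  refine ⟨spectrum_star_mul_self_nonneg t ht, ?_⟩
  have : 1 - t ∈ spectrum ℝ (star y * y) := by
    rw [eq_sub_of_add_eq' h, ← map_one (algebraMap ℝ A), ← spectrum.singleton_sub_eq]
    exact sub_mem_sub rfl ht
  linarith [spectrum_star_mul_self_nonneg _ this]

lemma exists_pos_mem_spectrum_star_mul_self {A : Type*} [CStarAlgebra A] {x : A} (hx : x ≠ 0) :
    ∃ t ∈ spectrum ℝ (star x * x), 0 < t := by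
  by_contra! h
  have : spectrum ℝ (star x * x) ⊆ {0} := fun t ht =>
    le_antisymm (h t ht) (spectrum_star_mul_self_nonneg t ht)
  exact hx ((CStarRing.star_mul_self_eq_zero_iff x).1
    (CFC.eq_zero_of_spectrum_subset_zero (R := ℝ) _ this))

/-- In a unital C*-algebra, if `x₀ = x₀*` and the sphere relations
`x₀² + x₁*x₁ = 1` and `q⁻²x₀² + x₁x₁* = 1` of the quantum sphere `S_q²` hold
with `|q| > 1`, then either `x₀ = 0` or the spectrum of `x₀²` is
`{0} ∪ {q^{−2k} : k ∈ ℕ}`. -/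
theorem spectrum_x0_sq_quantum_two_sphere
    (A : Type*) [NormedRing A] [StarRing A] [CStarRing A] [CompleteSpace A]
    [NormedAlgebra ℂ A] [StarModule ℂ A]
    (q : ℝ) (hq : 1 < |q|) (x0 x1 : A) (hx0 : star x0 = x0)
    (hs1 : x0 ^ 2 + star x1 * x1 = 1)
    (hs2 : ((q : ℂ)⁻¹ ^ 2) • x0 ^ 2 + x1 * star x1 = 1) :
    x0 = 0 ∨
      spectrum ℂ (x0 ^ 2)
        = {0} ∪ Set.range (fun k : ℕ => (q : ℂ) ^ (-(2 * (k : ℤ)))) := by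
  refine or_iff_not_imp_left.2 fun hx0_ne => ?_
  let _ : CStarAlgebra A := {}
  have : Nontrivial A := nontrivial_of_ne x0 0 hx0_ne
  have hsq : x0 ^ 2 = star x0 * x0 := by rw [hx0, sq]
  set c : ℝ := (q ^ 2)⁻¹
  have hq2 : 1 < q ^ 2 := (one_lt_sq_iff_one_lt_abs q).2 hq
  have hc0 : 0 < c := inv_pos.2 (zero_lt_one.trans hq2)
  have hc1 : c < 1 := inv_lt_one_of_one_lt₀ hq2
  have hs2' : c • x0 ^ 2 + x1 * star x1 = 1 := by
    rwa [← Complex.coe_smul, Complex.ofReal_inv, Complex.ofReal_pow, ← inv_pow]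
  have hpos : ∃ t ∈ spectrum ℝ (x0 ^ 2), 0 < t :=
    hsq ▸ exists_pos_mem_spectrum_star_mul_self hx0_ne
  have hspec : spectrum ℝ (x0 ^ 2) = insert 0 (range (c ^ ·)) := by
    refine eq_insert_zero_range_pow_of_insert_one_eq_smul hc0 hc1 (spectrum.isClosed _)
      (hsq ▸ spectrum_star_mul_self_subset_Icc_of_add_eq_one (hsq ▸ hs1)) hpos ?_
    rw [← spectrum.smul_eq_smul _ _ (hpos.imp fun _ => And.left)]
    exact spectrum.insert_one_eq_of_add_mul_eq_one hs1 hs2'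
  rw [← (IsSelfAdjoint.pow hx0 2).spectrumRestricts.algebraMap_image, hspec,
    image_insert_eq, map_zero, ← range_comp, insert_eq]
  congr 2 with k
  simp [c, zpow_neg, zpow_mul]
end

section
/- Let q be a real number with |q| > 1, n ≥ 1, and ε ∈ {+1, −1}. On the Hilbert space ℓ²(ℕⁿ) with standard orthonormal basis {e_{k₀,…,k_{n−1}} : (k₀,…,k_{n−1}) ∈ ℕⁿ}, there exist bounded operators X₀, X₁, …, Xₙ determined by: X₀ e_{k₀,…,k_{n−1}} = ε q^{−(k₀+⋯+k_{n−1})} e_{k₀,…,k_{n−1}}, and for 1 ≤ i ≤ n, X_i e_{k₀,…,k_{n−1}} = (1 − q^{−2k_{i−1}})^{1/2} q^{−(k_i+⋯+k_{n−1})} e_{k₀,…,k_{i−1}−1,…,k_{n−1}} (interpreted as 0 when k_{i−1} = 0). Moreover X₀ is self-adjoint, the adjoint of X_i acts by X_i* e_{k₀,…,k_{n−1}} = (1 − q^{−2(k_{i−1}+1)})^{1/2} q^{−(k_i+⋯+k_{n−1})} e_{k₀,…,k_{i−1}+1,…,k_{n−1}}, and the operators X₀, …, Xₙ satisfy the defining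 relations of S_q^{2n}: X_i X_j = q X_j X_i for 0 ≤ i < j ≤ n; X_i* X_j = q X_j X_i* for i ≠ j; X_i X_i* − X_i* X_i = (1 − q^{−2}) S_{i−1} where S₀ := X₀² and S_i := S_{i−1} + X_i* X_i; and Sₙ = 1. -/
/-- The Hilbert space `ℓ²(ℕⁿ)`. -/
noncomputable abbrev ellTwo (n : ℕ) : Type := lp (fun _ : Fin n → ℕ => ℂ) 2

/-- The standard basis vector `e_{k₀,…,k_{n−1}}` of `ℓ²(ℕⁿ)`. -/
noncomputable def basisVec (n : ℕ) (k : Fin n → ℕ) : ellTwo n := lp.single 2 k (1 : ℂ)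

/-!
Every generator is a weighted composition operator `f ↦ w • (f ∘ τ)` on `ℓ²(ℕⁿ)`: `X₀` and the
`S_i` are diagonal, while `X_{i+1}` composes with the injective shift `raise i` increasing `k_i`
by one. Since `|q| > 1` all weights have absolute value at most `1`, so these are contractions.
The adjoint of such an operator composes with the left inverse `lower i`, hence every relation
reduces to an identity between weights at a single multi-index; these all come from the fact that
raising `k_j` multiplies `q ^ (-∑_{l ∈ s} k_l)` by `q⁻¹` if `j ∈ s` and leaves it unchanged
otherwise. The relations `X_i* X_j = q X_j X_i*` with `i > j` are adjoints of relations with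
`i < j`.
-/

open Finset Function ContinuousLinearMap
open scoped lp ENNReal InnerProductSpace

namespace QuantumSphere

section WeightedComposition

variable {ι : Type*} {w : ι → ℝ} {τ : ι → ι}

theorem sum_norm_rpow_weightedComp_le (hw : ∀ m, |w m| ≤ 1) (hτ : Injective τ)
    (f : ℓ²(ι, ℂ)) (s : Finset ι) :
    ∑ m ∈ s, ‖(w m : ℂ) * f (τ m)‖ ^ (2 : ℝ≥0∞).toReal ≤ ‖f‖ ^ (2 : ℝ≥0∞).toReal := by
  classical
  calc ∑ m ∈ s, ‖(w m : ℂ) * f (τ m)‖ ^ (2 : ℝ≥0∞).toReal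
      ≤ ∑ m ∈ s, ‖f (τ m)‖ ^ (2 : ℝ≥0∞).toReal := by
        gcongr with m
        rw [norm_mul, Complex.norm_real, Real.norm_eq_abs]
        exact mul_le_of_le_one_left (norm_nonneg _) (hw m)
    _ = ∑ k ∈ s.image τ, ‖f k‖ ^ (2 : ℝ≥0∞).toReal := by rw [sum_image hτ.injOn]
    _ ≤ ‖f‖ ^ (2 : ℝ≥0∞).toReal := lp.sum_rpow_le_norm_rpow (by norm_num) f _

noncomputable def weightedComp (w : ι → ℝ) (τ : ι → ι) (hw : ∀ m, |w m| ≤ 1)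
    (hτ : Injective τ) : ℓ²(ι, ℂ) →L[ℂ] ℓ²(ι, ℂ) :=
  LinearMap.mkContinuous
    { toFun f := ⟨fun m => w m * f (τ m), memℓp_gen' (sum_norm_rpow_weightedComp_le hw hτ f)⟩
      map_add' f g := by ext m; exact mul_add ..
      map_smul' c f := by ext m; exact mul_left_comm .. }
    1 fun f => by
      rw [one_mul]
      exact lp.norm_le_of_forall_sum_le (by norm_num) (norm_nonneg f)
        (sum_norm_rpow_weightedComp_le hw hτ f)

variable {hw : ∀ m, |w m| ≤ 1} {hτ : Injective τ}

@[simp]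
theorem weightedComp_apply (f : ℓ²(ι, ℂ)) (m : ι) :
    weightedComp w τ hw hτ f m = w m * f (τ m) := rfl

variable [DecidableEq ι]

theorem weightedComp_single (k : ι) (c : ℂ) :
    weightedComp w τ hw hτ (lp.single 2 (τ k) c) = (w k : ℂ) • lp.single 2 k c := by
  ext m
  rw [weightedComp_apply, lp.coeFn_smul, Pi.smul_apply, lp.single_apply, lp.single_apply]
  by_cases h : m = k
  · subst h; simp
  · simp [h, hτ.ne h]

theorem weightedComp_single_of_notMem_range {k : ι} (hk : k ∉ Set.range τ) (c : ℂ) :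
    weightedComp w τ hw hτ (lp.single 2 k c) = 0 := by
  ext m
  simp [show τ m ≠ k from fun h => hk ⟨m, h⟩]

theorem adjoint_weightedComp_single (k : ι) (c : ℂ) :
    adjoint (weightedComp w τ hw hτ) (lp.single 2 k c) = (w k : ℂ) • lp.single 2 (τ k) c := by
  refine ext_inner_left ℂ fun v => ?_
  rw [adjoint_inner_right, ← lp.single_smul, lp.inner_single_right, lp.inner_single_right,
    weightedComp_apply]
  simp [mul_comm, mul_assoc]

theorem adjoint_weightedComp_apply {σ : ι → ι} (hσ : LeftInverse σ τ) {v : ι → ℝ}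
    (hv : ∀ k, v (τ k) = w k) (hv₀ : ∀ m ∉ Set.range τ, v m = 0) (f : ℓ²(ι, ℂ)) (m : ι) :
    adjoint (weightedComp w τ hw hτ) f m = v m * f (σ m) := by
  have hcoord : adjoint (weightedComp w τ hw hτ) f m
      = ⟪weightedComp w τ hw hτ (lp.single 2 m 1), f⟫_ℂ := by
    rw [← adjoint_inner_right, lp.inner_single_left]
    simp
  rw [hcoord]
  by_cases hm : m ∈ Set.range τ
  · obtain ⟨k, rfl⟩ := hm
    rw [weightedComp_single, ← lp.single_smul, lp.inner_single_left, hv, hσ k]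
    simp [mul_comm]
  · rw [weightedComp_single_of_notMem_range hm, inner_zero_left, hv₀ m hm, Complex.ofReal_zero,
      zero_mul]

theorem adjoint_weightedComp_id :
    adjoint (weightedComp w id hw injective_id) = weightedComp w id hw injective_id := by
  ext f m
  exact adjoint_weightedComp_apply (σ := id) (v := w) (fun _ => rfl) (fun _ => rfl)
    (fun m hm => (hm ⟨m, rfl⟩).elim) f m

end WeightedComposition

theorem adjoint_mul_adjoint_of_mul_eq_smul {E : Type*} [NormedAddCommGroup E]
    [InnerProductSpace ℂ E] [CompleteSpace E] {A B : E →L[ℂ] E} {r : ℝ}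
    (h : A * B = (r : ℂ) • (B * A)) :
    adjoint B * adjoint A = (r : ℂ) • (adjoint A * adjoint B) := by
  simpa [← star_eq_adjoint, star_smul] using congrArg star h

section IndexShifts

variable {ι : Type*} [DecidableEq ι] {i j : ι} {m : ι → ℕ}

def raise (i : ι) (m : ι → ℕ) : ι → ℕ := update m i (m i + 1)

def lower (i : ι) (m : ι → ℕ) : ι → ℕ := update m i (m i - 1)

@[simp]
theorem raise_apply_self : raise i m i = m i + 1 := update_self ..

theorem lower_raise (i : ι) (m : ι → ℕ) : lower i (raise i m) = m := by
  simp [lower, raise]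

theorem raise_lower (h : m i ≠ 0) : raise i (lower i m) = m := by
  simp [raise, lower, Nat.sub_add_cancel (Nat.one_le_iff_ne_zero.2 h)]

theorem raise_apply_of_ne (h : j ≠ i) : raise i m j = m j := update_of_ne h ..

theorem raise_injective (i : ι) : Injective (raise (ι := ι) i) :=
  LeftInverse.injective (lower_raise i)

theorem eq_zero_of_notMem_range_raise (h : m ∉ Set.range (raise i)) : m i = 0 :=
  by_contra fun hm => h ⟨lower i m, raise_lower hm⟩

theorem raise_update_of_ne (h : i ≠ j) (v : ℕ) :
    raise i (update m j v) = update (raise i m) j v := by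
  simp [raise, update_of_ne h, update_comm h]

theorem raise_comm (h : i ≠ j) : raise i (raise j m) = raise j (raise i m) := by
  show raise i (update m j _) = update (raise i m) j (raise i m j + 1)
  rw [raise_apply_of_ne h.symm, raise_update_of_ne h]

theorem raise_lower_comm (h : i ≠ j) : raise i (lower j m) = lower j (raise i m) := by
  rw [lower, raise_update_of_ne h, lower, raise, update_of_ne h.symm]

end IndexShifts

section Weights

variable {ι : Type*} {q : ℝ} {s : Finset ι} {i : ι} {m : ι → ℕ}

theorem abs_zpow_le_one (hq : 1 ≤ |q|) {z : ℤ} (hz : z ≤ 0) : |q ^ z| ≤ 1 := by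
  rw [abs_zpow]
  exact zpow_le_one_of_nonpos₀ hq hz

theorem ne_zero_of_one_le_abs (hq : 1 ≤ |q|) : q ≠ 0 := by
  rintro rfl
  norm_num at hq

theorem zpow_neg_two_mul (q : ℝ) (k : ℤ) : q ^ (-(2 * k)) = (q ^ (-k)) ^ 2 := by
  rw [show -(2 * k) = -k * 2 by ring, zpow_mul]
  norm_cast

noncomputable def qWeight (q : ℝ) (s : Finset ι) (m : ι → ℕ) : ℝ := q ^ (-∑ j ∈ s, (m j : ℤ))

theorem abs_qWeight_le_one (hq : 1 ≤ |q|) : |qWeight q s m| ≤ 1 :=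
  abs_zpow_le_one hq (neg_nonpos.2 (sum_nonneg fun _ _ => by positivity))

theorem qWeight_update_of_notMem [DecidableEq ι] (h : i ∉ s) (v : ℕ) :
    qWeight q s (update m i v) = qWeight q s m := by
  unfold qWeight
  congr 2
  exact sum_congr rfl fun j hj => by rw [update_of_ne (ne_of_mem_of_not_mem hj h)]

theorem qWeight_insert [DecidableEq ι] (hq : q ≠ 0) (h : i ∉ s) :
    qWeight q (insert i s) m = q ^ (-(m i : ℤ)) * qWeight q s m := by
  rw [qWeight, qWeight, sum_insert h, neg_add, zpow_add₀ hq]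

theorem qWeight_raise_of_mem [DecidableEq ι] (hq : q ≠ 0) (h : i ∈ s) :
    q * qWeight q s (raise i m) = qWeight q s m := by
  rw [← insert_erase h, qWeight_insert hq (notMem_erase i s), qWeight_insert hq (notMem_erase i s),
    raise_apply_self, raise, qWeight_update_of_notMem (notMem_erase i s), ← mul_assoc]
  congr 1
  rw [Nat.cast_succ, neg_add, zpow_add₀ hq, zpow_neg_one, mul_left_comm, mul_inv_cancel₀ hq,
    mul_one]

end Weights

section Ladder

variable {n : ℕ} {q : ℝ} {i j : Fin n} {m : Fin n → ℕ}

noncomputable def ladderWeight (q : ℝ) (i : Fin n) (m : Fin n → ℕ) : ℝ :=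
  √(1 - q ^ (-(2 * (m i : ℤ)))) * qWeight q {j | i < j} m

theorem one_sub_zpow_neg_two_mul_nonneg (hq : 1 ≤ |q|) {k : ℤ} (hk : 0 ≤ k) :
    0 ≤ 1 - q ^ (-(2 * k)) := by
  rw [zpow_neg_two_mul, sub_nonneg, sq_le_one_iff_abs_le_one]
  exact abs_zpow_le_one hq (by omega)

theorem abs_ladderWeight_le_one (hq : 1 ≤ |q|) : |ladderWeight q i m| ≤ 1 := by
  rw [ladderWeight, abs_mul, abs_of_nonneg (Real.sqrt_nonneg _)]
  refine mul_le_one₀ (Real.sqrt_le_one.2 (sub_le_self _ ?_)) (abs_nonneg _) (abs_qWeight_le_one hq)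
  rw [zpow_neg_two_mul]
  positivity

theorem ladderWeight_sq (hq : 1 ≤ |q|) :
    ladderWeight q i m ^ 2 = (1 - q ^ (-(2 * (m i : ℤ)))) * qWeight q {j | i < j} m ^ 2 := by
  rw [ladderWeight, mul_pow, Real.sq_sqrt (one_sub_zpow_neg_two_mul_nonneg hq (by positivity))]

theorem ladderWeight_of_eq_zero (h : m i = 0) : ladderWeight q i m = 0 := by
  simp [ladderWeight, h]

theorem ladderWeight_raise_self :
    ladderWeight q i (raise i m)
      = √(1 - q ^ (-(2 * ((m i : ℤ) + 1)))) * qWeight q {j | i < j} m := by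
  rw [ladderWeight, raise_apply_self, raise, qWeight_update_of_notMem (by simp)]
  push_cast
  rfl

theorem ladderWeight_update_of_lt (h : j < i) (v : ℕ) :
    ladderWeight q i (update m j v) = ladderWeight q i m := by
  rw [ladderWeight, ladderWeight, update_of_ne h.ne',
    qWeight_update_of_notMem (by simpa using h.le)]

theorem ladderWeight_raise_update_of_lt (h : j < i) (v : ℕ) :
    ladderWeight q i (raise i (update m j v)) = ladderWeight q i (raise i m) := by
  rw [raise_update_of_ne h.ne', ladderWeight_update_of_lt h]

theorem ladderWeight_raise_of_lt (hq : q ≠ 0) (h : i < j) :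
    q * ladderWeight q i (raise j m) = ladderWeight q i m := by
  rw [ladderWeight, ladderWeight, raise_apply_of_ne h.ne, mul_left_comm,
    qWeight_raise_of_mem hq (by simpa using h)]

theorem qWeight_filter_le (hq : q ≠ 0) :
    qWeight q {j | i ≤ j} m = q ^ (-(m i : ℤ)) * qWeight q {j | i < j} m := by
  rw [filter_le_eq_Ici, filter_lt_eq_Ioi, ← Ioi_insert, qWeight_insert hq notMem_Ioi_self]

theorem qWeight_le_sq_add_ladderWeight_sq (hq : 1 ≤ |q|) :
    qWeight q {j | i ≤ j} m ^ 2 + ladderWeight q i m ^ 2 = qWeight q {j | i < j} m ^ 2 := by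
  rw [qWeight_filter_le (ne_zero_of_one_le_abs hq), ladderWeight_sq hq, zpow_neg_two_mul]
  ring

theorem ladderWeight_raise_sq_sub_sq (hq : 1 ≤ |q|) :
    ladderWeight q i (raise i m) ^ 2 - ladderWeight q i m ^ 2
      = (1 - q⁻¹ ^ 2) * qWeight q {j | i ≤ j} m ^ 2 := by
  have hq₀ := ne_zero_of_one_le_abs hq
  have hsucc : q ^ (-((m i : ℤ) + 1)) = q ^ (-(m i : ℤ)) * q⁻¹ := by
    rw [neg_add, zpow_add₀ hq₀, zpow_neg_one]
  rw [ladderWeight_raise_self, mul_pow,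
    Real.sq_sqrt (one_sub_zpow_neg_two_mul_nonneg hq (by omega)), ladderWeight_sq hq, qWeight_filter_le hq₀, zpow_neg_two_mul, zpow_neg_two_mul, hsucc]
  ring

end Ladder

section Generators

variable {n : ℕ} {q ε : ℝ} (hq : 1 ≤ |q|) (hε : |ε| = 1) {i j : Fin n}

noncomputable def heightOp : ellTwo n →L[ℂ] ellTwo n :=
  weightedComp (fun m => ε * qWeight q univ m) id
    (fun _ => by rw [abs_mul, hε, one_mul]; exact abs_qWeight_le_one hq) injective_id

-- `X_{i+1}`: in coordinates it raises `m_i`, on basis vectors it lowers `k_i`.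
noncomputable def ladderOp (i : Fin n) : ellTwo n →L[ℂ] ellTwo n :=
  weightedComp (fun m => ladderWeight q i (raise i m)) (raise i)
    (fun _ => abs_ladderWeight_le_one hq) (raise_injective i)

noncomputable def radiusOp (i : Fin (n + 1)) : ellTwo n →L[ℂ] ellTwo n :=
  weightedComp (fun m => qWeight q {j : Fin n | i ≤ j.castSucc} m ^ 2) id
    (fun _ => by rw [abs_pow]; exact pow_le_one₀ (abs_nonneg _) (abs_qWeight_le_one hq))
    injective_id

@[simp]
theorem heightOp_apply (f : ellTwo n) (m : Fin n → ℕ) :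
    heightOp hq hε f m = (ε * qWeight q univ m : ℝ) * f m := rfl

@[simp]
theorem ladderOp_apply (f : ellTwo n) (m : Fin n → ℕ) :
    ladderOp hq i f m = ladderWeight q i (raise i m) * f (raise i m) := rfl

@[simp]
theorem radiusOp_apply (k : Fin (n + 1)) (f : ellTwo n) (m : Fin n → ℕ) :
    radiusOp hq k f m = (qWeight q {j : Fin n | k ≤ j.castSucc} m ^ 2 : ℝ) * f m := rfl

@[simp]
theorem adjoint_ladderOp_apply (f : ellTwo n) (m : Fin n → ℕ) :
    adjoint (ladderOp hq i) f m = ladderWeight q i m * f (lower i m) :=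
  adjoint_weightedComp_apply (lower_raise i) (fun _ => rfl)
    (fun _ hm => ladderWeight_of_eq_zero (eq_zero_of_notMem_range_raise hm)) f m

theorem adjoint_heightOp : adjoint (heightOp (n := n) hq hε) = heightOp hq hε :=
  adjoint_weightedComp_id

theorem heightOp_basisVec (k : Fin n → ℕ) :
    heightOp hq hε (basisVec n k)
      = ((ε * q ^ (-(∑ j : Fin n, (k j : ℤ))) : ℝ) : ℂ) • basisVec n k :=
  weightedComp_single (τ := id) k 1

theorem ladderOp_basisVec (k : Fin n → ℕ) :
    ladderOp hq i (basisVec n k) = (ladderWeight q i k : ℂ) • basisVec n (lower i k) := by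
  by_cases hk : k i = 0
  · rw [ladderWeight_of_eq_zero hk, Complex.ofReal_zero, zero_smul]
    exact weightedComp_single_of_notMem_range (fun ⟨m, hm⟩ => by simp [← hm] at hk) 1
  · conv_lhs => rw [basisVec, ← raise_lower hk]
    rw [ladderOp, weightedComp_single, raise_lower hk]
    rfl

theorem adjoint_ladderOp_basisVec (k : Fin n → ℕ) :
    adjoint (ladderOp hq i) (basisVec n k)
      = ((√(1 - q ^ (-(2 * ((k i : ℤ) + 1)))) * qWeight q {j | i < j} k : ℝ) : ℂ) •
          basisVec n (raise i k) := by
  rw [ladderOp, basisVec, adjoint_weightedComp_single, ladderWeight_raise_self]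
  rfl

theorem heightOp_mul_ladderOp :
    heightOp hq hε * ladderOp hq j = (q : ℂ) • (ladderOp hq j * heightOp hq hε) := by
  ext f m
  have hweight := qWeight_raise_of_mem (ne_zero_of_one_le_abs hq) (mem_univ j) (m := m)
  simp only [mul_apply_eq_comp, smul_apply, lp.coeFn_smul, Pi.smul_apply, smul_eq_mul,
    heightOp_apply, ladderOp_apply, ← hweight]
  push_cast
  ring

theorem ladderOp_mul_ladderOp (h : i < j) :
    ladderOp hq i * ladderOp hq j = (q : ℂ) • (ladderOp hq j * ladderOp hq i) := by
  ext f m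
  simp only [mul_apply_eq_comp, smul_apply, lp.coeFn_smul, Pi.smul_apply, smul_eq_mul,
    ladderOp_apply]
  have hj : ladderWeight q j (raise j (raise i m)) = ladderWeight q j (raise j m) :=
    ladderWeight_raise_update_of_lt h _
  rw [raise_comm h.ne, hj, ← ladderWeight_raise_of_lt (ne_zero_of_one_le_abs hq) h,
    raise_comm h.ne']
  push_cast
  ring

theorem adjoint_ladderOp_mul_ladderOp (h : i < j) :
    adjoint (ladderOp hq i) * ladderOp hq j
      = (q : ℂ) • (ladderOp hq j * adjoint (ladderOp hq i)) := by
  ext f m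
  simp only [mul_apply_eq_comp, smul_apply, lp.coeFn_smul, Pi.smul_apply, smul_eq_mul,
    ladderOp_apply, adjoint_ladderOp_apply]
  have hj : ladderWeight q j (raise j (lower i m)) = ladderWeight q j (raise j m) :=
    ladderWeight_raise_update_of_lt h _
  rw [hj, raise_lower_comm h.ne', ← ladderWeight_raise_of_lt (ne_zero_of_one_le_abs hq) h]
  push_cast
  ring

theorem adjoint_ladderOp_mul_ladderOp_self_apply (f : ellTwo n) (m : Fin n → ℕ) :
    (adjoint (ladderOp hq i) * ladderOp hq i) f m = (ladderWeight q i m ^ 2 : ℝ) * f m := by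
  rw [mul_apply_eq_comp, adjoint_ladderOp_apply, ladderOp_apply]
  by_cases h : m i = 0
  · simp [ladderWeight_of_eq_zero h]
  · rw [raise_lower h]
    push_cast
    ring

theorem ladderOp_mul_adjoint_ladderOp_self_apply (f : ellTwo n) (m : Fin n → ℕ) :
    (ladderOp hq i * adjoint (ladderOp hq i)) f m
      = (ladderWeight q i (raise i m) ^ 2 : ℝ) * f m := by
  rw [mul_apply_eq_comp, ladderOp_apply, adjoint_ladderOp_apply, lower_raise]
  push_cast
  ring

theorem radiusOp_zero : radiusOp hq 0 = heightOp (n := n) hq hε * heightOp hq hε := by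
  have hε2 : ε * ε = 1 := by rw [← abs_mul_abs_self, hε, one_mul]
  ext f m
  simp only [mul_apply_eq_comp, radiusOp_apply, heightOp_apply, Fin.zero_le, filter_true]
  rw [← mul_assoc, ← Complex.ofReal_mul, mul_mul_mul_comm, hε2, one_mul]
  push_cast
  ring

theorem radiusOp_succ :
    radiusOp hq i.succ = radiusOp hq i.castSucc + adjoint (ladderOp hq i) * ladderOp hq i := by
  ext f m
  rw [add_apply, lp.coeFn_add, Pi.add_apply, adjoint_ladderOp_mul_ladderOp_self_apply,
    radiusOp_apply, radiusOp_apply]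
  simp only [Fin.succ_le_castSucc_iff, Fin.castSucc_le_castSucc_iff]
  rw [← qWeight_le_sq_add_ladderWeight_sq hq]
  push_cast
  ring

theorem ladderOp_mul_adjoint_sub_adjoint_mul :
    ladderOp hq i * adjoint (ladderOp hq i) - adjoint (ladderOp hq i) * ladderOp hq i
      = ((1 - q⁻¹ ^ 2 : ℝ) : ℂ) • radiusOp hq i.castSucc := by
  ext f m
  rw [sub_apply, lp.coeFn_sub, Pi.sub_apply, adjoint_ladderOp_mul_ladderOp_self_apply,
    ladderOp_mul_adjoint_ladderOp_self_apply, smul_apply, lp.coeFn_smul, Pi.smul_apply,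
    smul_eq_mul, radiusOp_apply, ← sub_mul, ← Complex.ofReal_sub, ladderWeight_raise_sq_sub_sq hq]
  simp only [Fin.castSucc_le_castSucc_iff]
  push_cast
  ring

theorem radiusOp_last : radiusOp (n := n) hq (Fin.last n) = 1 := by
  ext f m
  simp [qWeight]

noncomputable def sphereGen : Fin (n + 1) → (ellTwo n →L[ℂ] ellTwo n) :=
  Fin.cases (heightOp hq hε) (ladderOp hq)

theorem sphereGen_mul_of_lt {i j : Fin (n + 1)} (hij : i < j) :
    sphereGen hq hε i * sphereGen hq hε j = (q : ℂ) • (sphereGen hq hε j * sphereGen hq hε i) := by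
  cases j using Fin.cases with
  | zero => exact absurd hij (Fin.not_lt_zero i)
  | succ b =>
    cases i using Fin.cases with
    | zero => exact heightOp_mul_ladderOp hq hε
    | succ a => exact ladderOp_mul_ladderOp hq (Fin.succ_lt_succ_iff.1 hij)

theorem adjoint_sphereGen_mul_of_ne {i j : Fin (n + 1)} (hij : i ≠ j) :
    adjoint (sphereGen hq hε i) * sphereGen hq hε j
      = (q : ℂ) • (sphereGen hq hε j * adjoint (sphereGen hq hε i)) := by
  cases i using Fin.cases with
  | zero =>
    cases j using Fin.cases with
    | zero => exact absurd rfl hij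
    | succ b =>
      simpa only [sphereGen, Fin.cases_zero, Fin.cases_succ, adjoint_heightOp]
        using heightOp_mul_ladderOp hq hε
  | succ a =>
    cases j using Fin.cases with
    | zero =>
      simpa only [sphereGen, Fin.cases_zero, Fin.cases_succ, adjoint_heightOp]
        using adjoint_mul_adjoint_of_mul_eq_smul (heightOp_mul_ladderOp hq hε (j := a))
    | succ b =>
      rcases lt_or_gt_of_ne (Fin.succ_injective _ |>.ne_iff.1 hij) with h | h
      · exact adjoint_ladderOp_mul_ladderOp hq h
      · have := adjoint_mul_adjoint_of_mul_eq_smul (adjoint_ladderOp_mul_ladderOp hq h)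
        rwa [adjoint_adjoint] at this

end Generators

end QuantumSphere

open QuantumSphere

theorem even_sphere_representation_general
    (q : ℝ) (hq : 1 < |q|) (n : ℕ) (ε : ℝ) (hε : ε = 1 ∨ ε = -1) :
    ∃ X : Fin (n + 1) → (ellTwo n →L[ℂ] ellTwo n),
      (∀ k : Fin n → ℕ,
        X 0 (basisVec n k)
          = ((ε * q ^ (-(∑ j : Fin n, (k j : ℤ))) : ℝ) : ℂ) • basisVec n k) ∧
      (∀ (i : Fin n) (k : Fin n → ℕ),
        X i.succ (basisVec n k)
          = ((Real.sqrt (1 - q ^ (-(2 * (k i : ℤ))))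
              * q ^ (-(∑ j ∈ Finset.univ.filter (fun j => i < j), (k j : ℤ))) : ℝ) : ℂ) •
              basisVec n (Function.update k i (k i - 1))) ∧
      ContinuousLinearMap.adjoint (X 0) = X 0 ∧
      (∀ (i : Fin n) (k : Fin n → ℕ),
        ContinuousLinearMap.adjoint (X i.succ) (basisVec n k)
          = ((Real.sqrt (1 - q ^ (-(2 * ((k i : ℤ) + 1))))
              * q ^ (-(∑ j ∈ Finset.univ.filter (fun j => i < j), (k j : ℤ))) : ℝ) : ℂ) •
              basisVec n (Function.update k i (k i + 1))) ∧
      (∀ i j : Fin (n + 1), i < j → X i * X j = (q : ℂ) • (X j * X i)) ∧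
      (∀ i j : Fin (n + 1), i ≠ j →
        ContinuousLinearMap.adjoint (X i) * X j
          = (q : ℂ) • (X j * ContinuousLinearMap.adjoint (X i))) ∧
      ∃ S : Fin (n + 1) → (ellTwo n →L[ℂ] ellTwo n),
        S 0 = X 0 * X 0 ∧
        (∀ i : Fin n,
          S i.succ = S i.castSucc + ContinuousLinearMap.adjoint (X i.succ) * X i.succ) ∧
        (∀ i : Fin n,
          X i.succ * ContinuousLinearMap.adjoint (X i.succ)
              - ContinuousLinearMap.adjoint (X i.succ) * X i.succ
            = ((1 - q⁻¹ ^ 2 : ℝ) : ℂ) • S i.castSucc) ∧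
        S (Fin.last n) = 1 := by
  have hq₁ : 1 ≤ |q| := hq.le
  have hε₁ : |ε| = 1 := by rcases hε with rfl | rfl <;> simp
  exact ⟨sphereGen hq₁ hε₁, heightOp_basisVec hq₁ hε₁, fun i => ladderOp_basisVec hq₁,
    adjoint_heightOp hq₁ hε₁, fun i => adjoint_ladderOp_basisVec hq₁,
    fun _ _ => sphereGen_mul_of_lt hq₁ hε₁, fun _ _ => adjoint_sphereGen_mul_of_ne hq₁ hε₁,
    radiusOp hq₁, radiusOp_zero hq₁ hε₁, fun _ => radiusOp_succ hq₁,
    fun _ => ladderOp_mul_adjoint_sub_adjoint_mul hq₁, radiusOp_last hq₁⟩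

/-- The irreducible representations `ψ_±^{(2n)}` of the quantum Euclidean sphere
`S_q^{2n}` (`|q| > 1`, sign `ε = ±1`): there are bounded operators `X₀, …, Xₙ` on
`ℓ²(ℕⁿ)` acting on the standard basis by the stated formulas, with the stated
adjoints, satisfying the defining relations of `S_q^{2n}`. -/
theorem even_sphere_representation
    (q : ℝ) (hq : 1 < |q|) (n : ℕ) (hn : 1 ≤ n) (ε : ℝ) (hε : ε = 1 ∨ ε = -1) :
    ∃ X : Fin (n + 1) → (ellTwo n →L[ℂ] ellTwo n),
      (∀ k : Fin n → ℕ,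
        X 0 (basisVec n k)
          = ((ε * q ^ (-(∑ j : Fin n, (k j : ℤ))) : ℝ) : ℂ) • basisVec n k) ∧
      (∀ (i : Fin n) (k : Fin n → ℕ),
        X i.succ (basisVec n k)
          = ((Real.sqrt (1 - q ^ (-(2 * (k i : ℤ))))
              * q ^ (-(∑ j ∈ Finset.univ.filter (fun j => i < j), (k j : ℤ))) : ℝ) : ℂ) •
              basisVec n (Function.update k i (k i - 1))) ∧
      ContinuousLinearMap.adjoint (X 0) = X 0 ∧
      (∀ (i : Fin n) (k : Fin n → ℕ),
        ContinuousLinearMap.adjoint (X i.succ) (basisVec n k)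
          = ((Real.sqrt (1 - q ^ (-(2 * ((k i : ℤ) + 1))))
              * q ^ (-(∑ j ∈ Finset.univ.filter (fun j => i < j), (k j : ℤ))) : ℝ) : ℂ) •
              basisVec n (Function.update k i (k i + 1))) ∧
      (∀ i j : Fin (n + 1), i < j → X i * X j = (q : ℂ) • (X j * X i)) ∧
      (∀ i j : Fin (n + 1), i ≠ j →
        ContinuousLinearMap.adjoint (X i) * X j
          = (q : ℂ) • (X j * ContinuousLinearMap.adjoint (X i))) ∧
      ∃ S : Fin (n + 1) → (ellTwo n →L[ℂ] ellTwo n),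
        S 0 = X 0 * X 0 ∧
        (∀ i : Fin n,
          S i.succ = S i.castSucc + ContinuousLinearMap.adjoint (X i.succ) * X i.succ) ∧
        (∀ i : Fin n,
          X i.succ * ContinuousLinearMap.adjoint (X i.succ)
              - ContinuousLinearMap.adjoint (X i.succ) * X i.succ
            = ((1 - q⁻¹ ^ 2 : ℝ) : ℂ) • S i.castSucc) ∧
        S (Fin.last n) = 1 :=
  even_sphere_representation_general q hq n ε hε
end
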